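/- arXiv:2410.19850 — 6 statements merged into one kernel-verified Lean document; each statement's English description precedes it below -/
import Mathlib

section
/- Let G be a finite connected simple graph, let (𝓑, 𝓒) be a generalized block-cut set of G, let B* ∈ 𝓑, and let c be an articulation point of B* (a vertex of B* whose removal disconnects B*). Let B_1, …, B_k (k ≥ 2) be the connected components of B* − c, and for each i let B_i^+ be the subgraph of B* with vertex set V(B_i) ∪ {c} consisting of all edges of B* with both endpoints in V(B_i) ∪ {c}. Then: each B_i^+ is connected; the edge sets of B_1^+, …, B_k^+ partition E(B*); V(B_i^+) ∩ V(B_j^+) = {c} for all i ≠ j; and the pair ((𝓑 \ {B*}) ∪ {B_1^+, …, B_k^+}, 𝓒 ∪ {c}) is again a generalized block-cut set of G. -/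
variable {V : Type} [Fintype V] [DecidableEq V]

/-- `c` is an articulation point (cut-point) of the subgraph `B`: removing `c`
increases the number of connected components. -/
def IsArtic (G : SimpleGraph V) (B : G.Subgraph) (c : V) : Prop :=
  c ∈ B.verts ∧
  Nat.card B.coe.ConnectedComponent <
    Nat.card ((B.deleteVerts {c}).coe.ConnectedComponent)

/-- The vertex sets (as subsets of `V`) of the connected components of `B − c`. -/
def compVertexSets (G : SimpleGraph V) (B : G.Subgraph) (c : V) : Set (Set V) :=
  {S | ∃ Kc : (B.deleteVerts {c}).coe.ConnectedComponent,
        S = Subtype.val ''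
          {x | (B.deleteVerts {c}).coe.connectedComponentMk x = Kc}}

/-- For each connected component `S` of `B − c`, the subgraph `B_i⁺` of `B`
on vertex set `S ∪ {c}` with all edges of `B` having both endpoints therein. -/
def splitBlocks (G : SimpleGraph V) (B : G.Subgraph) (c : V) : Set G.Subgraph :=
  (fun S => B.induce (S ∪ {c})) '' compVertexSets G B c

/-- A generalized block-cut set `(𝓑, 𝓒)` of `G`: a finite set of connected
subgraphs whose edge sets cover `E(G)`, any two of which intersect in at most
a single vertex, which then belongs to `𝓒`. -/
def IsGBC (G : SimpleGraph V) (𝓑 : Set G.Subgraph) (𝓒 : Set V) : Prop :=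
  𝓑.Finite ∧
  (∀ B ∈ 𝓑, B.Connected) ∧
  (⋃ B ∈ 𝓑, B.edgeSet) = G.edgeSet ∧
  (∀ B₁ ∈ 𝓑, ∀ B₂ ∈ 𝓑, B₁ ≠ B₂ → (B₁.verts ∩ B₂.verts).Nonempty →
    ∃ c ∈ 𝓒, B₁.verts ∩ B₂.verts = {c})

namespace SplitAux

open SimpleGraph

variable {G : SimpleGraph V} {B : G.Subgraph} {c : V}
set_option linter.unusedSectionVars false

lemma not_c_mem {S : Set V} (hS : S ∈ compVertexSets G B c) : c ∉ S := by
  obtain ⟨Kc, rfl⟩ := hS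
  rintro ⟨x, -, h⟩
  exact x.2.2 h

lemma subset_verts {S : Set V} (hS : S ∈ compVertexSets G B c) : S ⊆ B.verts := by
  obtain ⟨Kc, rfl⟩ := hS
  rintro _ ⟨x, -, rfl⟩
  exact x.2.1

lemma comps_eq {S₁ S₂ : Set V} (h₁ : S₁ ∈ compVertexSets G B c)
    (h₂ : S₂ ∈ compVertexSets G B c) {x : V} (hx₁ : x ∈ S₁) (hx₂ : x ∈ S₂) : S₁ = S₂ := by
  obtain ⟨K₁, rfl⟩ := h₁
  obtain ⟨K₂, rfl⟩ := h₂
  obtain ⟨y₁, hy₁, hv₁⟩ := hx₁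
  obtain ⟨y₂, hy₂, hv₂⟩ := hx₂
  obtain rfl : y₁ = y₂ := Subtype.ext (hv₁.trans hv₂.symm)
  rw [← hy₁, ← hy₂]

lemma induce_conn (hcB : c ∈ B.verts) (hBc : B.Connected)
    {S : Set V} (hS : S ∈ compVertexSets G B c) :
    (B.induce (S ∪ {c})).Connected := by
  have hc' : c ∈ S ∪ {c} := Or.inr rfl
  have key : ∀ (a b : B.verts) (w : B.coe.Walk a b), (b : V) = c → ∀ ha : (a : V) ∈ S,
      (B.induce (S ∪ {c})).coe.Reachable ⟨a, Or.inl ha⟩ ⟨c, hc'⟩ := by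
    intro a b w
    induction w with
    | nil =>
      intro hb ha
      exact absurd (hb ▸ ha) (not_c_mem hS)
    | @cons a d b h p ih =>
      intro hb ha
      by_cases hd : (d : V) = c
      · exact SimpleGraph.Adj.reachable ⟨Or.inl ha, Or.inr rfl, hd ▸ h⟩
      · have had : (a : V) ≠ c := fun hEq => (not_c_mem hS) (hEq ▸ ha)
        have haD : (a : V) ∈ (B.deleteVerts {c}).verts := ⟨a.2, had⟩
        have hdD : (d : V) ∈ (B.deleteVerts {c}).verts := ⟨d.2, hd⟩
        have hDadj : (B.deleteVerts {c}).coe.Adj ⟨a, haD⟩ ⟨d, hdD⟩ := by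
          rw [Subgraph.coe_adj, Subgraph.deleteVerts_adj]
          exact ⟨a.2, had, d.2, hd, h⟩
        have hdS : (d : V) ∈ S := by
          obtain ⟨Kc, rfl⟩ := hS
          obtain ⟨y, hy, hv⟩ := ha
          obtain rfl : y = ⟨(a : V), haD⟩ := Subtype.ext hv
          exact ⟨⟨d, hdD⟩, (ConnectedComponent.sound hDadj.symm.reachable).trans hy, rfl⟩
        have hIadj : (B.induce (S ∪ {c})).coe.Adj ⟨a, Or.inl ha⟩ ⟨d, Or.inl hdS⟩ :=
          ⟨Or.inl ha, Or.inl hdS, h⟩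
        exact hIadj.reachable.trans (ih hb hdS)
  refine Subgraph.connected_iff.mpr ⟨⟨?_⟩, ⟨c, hc'⟩⟩
  have reach : ∀ u : (B.induce (S ∪ {c})).verts,
      (B.induce (S ∪ {c})).coe.Reachable u ⟨c, hc'⟩ := by
    rintro ⟨u, hu | hu⟩
    · obtain ⟨w⟩ := hBc ⟨u, subset_verts hS hu⟩ ⟨c, hcB⟩
      exact key _ _ w rfl hu
    · subst hu
      rfl
  intro u v
  exact (reach u).trans (reach v).symm

lemma edge_iUnion (hcB : c ∈ B.verts) :
    (⋃ S ∈ compVertexSets G B c, (B.induce (S ∪ {c})).edgeSet) = B.edgeSet := by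
  ext e
  induction e using Sym2.ind with
  | _ a b =>
    simp only [Set.mem_iUnion, Subgraph.mem_edgeSet, Subgraph.induce_adj]
    constructor
    · rintro ⟨S, hS, -, -, h⟩; exact h
    · intro h
      have hab : a ≠ b := (B.adj_sub h).ne
      by_cases hac : a = c
      · subst hac
        have hbD : b ∈ (B.deleteVerts {a}).verts :=
          ⟨B.edge_vert h.symm, fun hb => hab hb.symm⟩
        exact ⟨_, ⟨(B.deleteVerts {a}).coe.connectedComponentMk ⟨b, hbD⟩, rfl⟩,
          Or.inr rfl, Or.inl ⟨⟨b, hbD⟩, rfl, rfl⟩, h⟩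
      · by_cases hbc : b = c
        · subst hbc
          have haD : a ∈ (B.deleteVerts {b}).verts := ⟨B.edge_vert h, hac⟩
          exact ⟨_, ⟨(B.deleteVerts {b}).coe.connectedComponentMk ⟨a, haD⟩, rfl⟩,
            Or.inl ⟨⟨a, haD⟩, rfl, rfl⟩, Or.inr rfl, h⟩
        · have haD : a ∈ (B.deleteVerts {c}).verts := ⟨B.edge_vert h, hac⟩
          have hbD : b ∈ (B.deleteVerts {c}).verts := ⟨B.edge_vert h.symm, hbc⟩
          have hDadj : (B.deleteVerts {c}).coe.Adj ⟨a, haD⟩ ⟨b, hbD⟩ := by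
            rw [Subgraph.coe_adj, Subgraph.deleteVerts_adj]
            exact ⟨B.edge_vert h, hac, B.edge_vert h.symm, hbc, h⟩
          exact ⟨_, ⟨(B.deleteVerts {c}).coe.connectedComponentMk ⟨a, haD⟩, rfl⟩,
            Or.inl ⟨⟨a, haD⟩, rfl, rfl⟩,
            Or.inl ⟨⟨b, hbD⟩, ConnectedComponent.sound hDadj.symm.reachable, rfl⟩, h⟩

lemma verts_inter {S₁ S₂ : Set V} (h₁ : S₁ ∈ compVertexSets G B c)
    (h₂ : S₂ ∈ compVertexSets G B c) (hne : S₁ ≠ S₂) :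
    (S₁ ∪ {c}) ∩ (S₂ ∪ {c}) = {c} := by
  ext x
  constructor
  · rintro ⟨hx1 | hx1, hx2 | hx2⟩
    · exact absurd (comps_eq h₁ h₂ hx1 hx2) hne
    · exact hx2
    · exact hx1
    · exact hx1
  · rintro rfl
    exact ⟨Or.inr rfl, Or.inr rfl⟩


lemma edge_disjoint {S₁ S₂ : Set V} (h₁ : S₁ ∈ compVertexSets G B c)
    (h₂ : S₂ ∈ compVertexSets G B c) (hne : S₁ ≠ S₂) :
    Disjoint (B.induce (S₁ ∪ {c})).edgeSet (B.induce (S₂ ∪ {c})).edgeSet := by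
  rw [Set.disjoint_left]
  intro e he1 he2
  induction e using Sym2.ind with
  | _ a b =>
    rw [SimpleGraph.Subgraph.mem_edgeSet, SimpleGraph.Subgraph.induce_adj] at he1 he2
    have hiv := verts_inter h₁ h₂ hne
    have ha : a = c := by
      have : a ∈ (S₁ ∪ {c}) ∩ (S₂ ∪ {c}) := ⟨he1.1, he2.1⟩
      rwa [hiv] at this
    have hb : b = c := by
      have : b ∈ (S₁ ∪ {c}) ∩ (S₂ ∪ {c}) := ⟨he1.2.1, he2.2.1⟩
      rwa [hiv] at this
    exact (B.adj_sub he1.2.2).ne (ha.trans hb.symm)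

lemma comps_finite : (compVertexSets G B c).Finite := by
  have : compVertexSets G B c =
      Set.range (fun Kc : (B.deleteVerts {c}).coe.ConnectedComponent =>
        Subtype.val '' {x | (B.deleteVerts {c}).coe.connectedComponentMk x = Kc}) := by
    ext S
    simp only [compVertexSets, Set.mem_setOf_eq, Set.mem_range, eq_comm]
  rw [this]
  haveI : Finite ((B.deleteVerts {c}).coe.ConnectedComponent) :=
    Quot.finite _
  exact Set.finite_range _



end SplitAux

/-- Splitting a generalized block `B ∈ 𝓑` at an articulation point `c`:
each `B_i⁺` is connected, their edge sets partition `E(B)`, any two of them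
meet exactly in `{c}`, and the result is again a generalized block-cut set. -/
theorem split_at_articulation_point
    (G : SimpleGraph V) (hG : G.Connected)
    (𝓑 : Set G.Subgraph) (𝓒 : Set V) (hGBC : IsGBC G 𝓑 𝓒)
    (B : G.Subgraph) (hB : B ∈ 𝓑) (c : V) (hc : IsArtic G B c) :
    (∀ S ∈ compVertexSets G B c, (B.induce (S ∪ {c})).Connected) ∧
    (⋃ S ∈ compVertexSets G B c, (B.induce (S ∪ {c})).edgeSet) = B.edgeSet ∧
    (∀ S₁ ∈ compVertexSets G B c, ∀ S₂ ∈ compVertexSets G B c, S₁ ≠ S₂ →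
      Disjoint (B.induce (S₁ ∪ {c})).edgeSet (B.induce (S₂ ∪ {c})).edgeSet) ∧
    (∀ S₁ ∈ compVertexSets G B c, ∀ S₂ ∈ compVertexSets G B c, S₁ ≠ S₂ →
      (B.induce (S₁ ∪ {c})).verts ∩ (B.induce (S₂ ∪ {c})).verts = {c}) ∧
    IsGBC G ((𝓑 \ {B}) ∪ splitBlocks G B c) (𝓒 ∪ {c}) := by
  obtain ⟨hFin, hConn, hEdge, hInter⟩ := hGBC
  have hcB : c ∈ B.verts := hc.1
  have hBconn : B.Connected := hConn B hB
  refine ⟨fun S hS => SplitAux.induce_conn hcB hBconn hS,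
    SplitAux.edge_iUnion hcB,
    fun S₁ h₁ S₂ h₂ hne => SplitAux.edge_disjoint h₁ h₂ hne,
    fun S₁ h₁ S₂ h₂ hne => SplitAux.verts_inter h₁ h₂ hne,
    ?_, ?_, ?_, ?_⟩
  · exact (hFin.diff).union (SplitAux.comps_finite.image _)
  · rintro B' (hB' | ⟨S, hS, rfl⟩)
    · exact hConn B' hB'.1
    · exact SplitAux.induce_conn hcB hBconn hS
  · rw [Set.biUnion_union]
    have h1 : (⋃ B' ∈ splitBlocks G B c, B'.edgeSet) = B.edgeSet := by
      rw [show splitBlocks G B c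
          = (fun S => B.induce (S ∪ {c})) '' compVertexSets G B c from rfl,
        Set.biUnion_image]
      exact SplitAux.edge_iUnion hcB
    rw [h1, ← hEdge]
    conv_rhs => rw [← Set.diff_union_of_subset (Set.singleton_subset_iff.mpr hB)]
    rw [Set.biUnion_union, Set.biUnion_singleton]
  · rintro B₁ hB₁ B₂ hB₂ hne hnon
    rcases hB₁ with hB₁ | ⟨S₁, hS₁, rfl⟩ <;> rcases hB₂ with hB₂ | ⟨S₂, hS₂, rfl⟩
    · obtain ⟨d, hd, heq⟩ := hInter B₁ hB₁.1 B₂ hB₂.1 hne hnon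
      exact ⟨d, Or.inl hd, heq⟩
    · have hsub : (B.induce (S₂ ∪ {c})).verts ⊆ B.verts := by
        rintro x (hx | hx)
        · exact SplitAux.subset_verts hS₂ hx
        · exact hx ▸ hcB
      obtain ⟨d, hd, heq⟩ := hInter B₁ hB₁.1 B hB hB₁.2
        (hnon.mono (Set.inter_subset_inter_right _ hsub))
      have hsub2 : B₁.verts ∩ (B.induce (S₂ ∪ {c})).verts ⊆ {d} :=
        heq ▸ Set.inter_subset_inter_right _ hsub
      refine ⟨d, Or.inl hd, ?_⟩
      rcases Set.subset_singleton_iff_eq.mp hsub2 with h | h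
      · exact absurd h (Set.nonempty_iff_ne_empty.mp hnon)
      · exact h
    · have hsub : (B.induce (S₁ ∪ {c})).verts ⊆ B.verts := by
        rintro x (hx | hx)
        · exact SplitAux.subset_verts hS₁ hx
        · exact hx ▸ hcB
      rw [Set.inter_comm] at hnon
      obtain ⟨d, hd, heq⟩ := hInter B₂ hB₂.1 B hB hB₂.2
        (hnon.mono (Set.inter_subset_inter_right _ hsub))
      have hsub2 : B₂.verts ∩ (B.induce (S₁ ∪ {c})).verts ⊆ {d} :=
        heq ▸ Set.inter_subset_inter_right _ hsub
      refine ⟨d, Or.inl hd, ?_⟩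
      rw [Set.inter_comm]
      rcases Set.subset_singleton_iff_eq.mp hsub2 with h | h
      · exact absurd h (Set.nonempty_iff_ne_empty.mp hnon)
      · exact h
    · have hSne : S₁ ≠ S₂ := fun h => hne (by rw [h])
      exact ⟨c, Or.inr rfl, SplitAux.verts_inter hS₁ hS₂ hSne⟩
end

section
/- Let a network be given on a finite directed graph with vertex set V and edge set E, let (π, f) be a solution of the network flow system NF_π, let c ∈ V be a non-slack vertex, and let K ⊆ V \ {c} be a set of vertices containing no slack vertices such that no edge of E joins a vertex of K to a vertex of V \ (K ∪ {c}) (in either direction). Let H be the induced subnetwork on V \ K (with edge set all edges of E having both endpoints in V \ K, the same γ, g, slack set, slack potentials, and injections, except that the injection at c is replaced by q*_c + Σ_{i ∈ K} q*_i). Then the restrictions of π to V \ K and of f to the edges of H form a solution of the network flow system NF_π for H. -/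
/-- A network on the finite vertex set `Vs` (within an ambient vertex type
`V`): a finite directed edge set `E` between vertices of `Vs`, a positive
constant `γ` and a function `g : ℝ → ℝ` for each edge, a set `slack ⊆ Vs` of
slack vertices (the remaining vertices of `Vs` are non-slack), prescribed
injections `q` (relevant at non-slack vertices) and prescribed potentials
`pstar` (relevant at slack vertices). -/
structure Network (V : Type) [DecidableEq V] where
  Vs : Finset V
  E : Finset (V × V)
  edge_mem : ∀ e ∈ E, e.1 ∈ Vs ∧ e.2 ∈ Vs
  γ : V × V → ℝ
  γ_pos : ∀ e ∈ E, 0 < γ e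
  g : V × V → ℝ → ℝ
  slack : Finset V
  slack_sub : slack ⊆ Vs
  q : V → ℝ
  pstar : V → ℝ

variable {V : Type} [DecidableEq V]

/-- `(π, f)` is a solution of the network flow system `NF_π` for `N`. -/
def IsSolution (N : Network V) (π : V → ℝ) (f : V × V → ℝ) : Prop :=
  (∀ e ∈ N.E, N.γ e * π e.1 - π e.2 = N.g e (f e)) ∧
  (∀ i ∈ N.Vs, i ∉ N.slack →
    (∑ e ∈ N.E.filter (fun e => e.2 = i), f e) -
      (∑ e ∈ N.E.filter (fun e => e.1 = i), f e) = N.q i) ∧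
  (∀ i ∈ N.slack, π i = N.pstar i)

/-- If `(π, f)` solves `NF_π`, `c` is a non-slack vertex, and `K` is a set of
non-slack vertices not containing `c` with no edge joining `K` to the outside
of `K ∪ {c}`, then `(π, f)` (restricted) solves `NF_π` for the induced
subnetwork `H` on `V \ K` whose injection at `c` is `q*_c + Σ_{i ∈ K} q*_i`. -/
theorem restriction_to_complement_is_solution
    (N : Network V) (π : V → ℝ) (f : V × V → ℝ)
    (hsol : IsSolution N π f)
    (c : V) (hc : c ∈ N.Vs) (hcns : c ∉ N.slack)
    (K : Finset V) (hK : K ⊆ N.Vs) (hcK : c ∉ K)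
    (hsep : ∀ e ∈ N.E,
      (e.1 ∈ K → e.2 ∈ K ∨ e.2 = c) ∧ (e.2 ∈ K → e.1 ∈ K ∨ e.1 = c))
    (hns : ∀ v ∈ K, v ∉ N.slack)
    (H : Network V)
    (hVs : H.Vs = N.Vs \ K)
    (hE : H.E = N.E.filter (fun e => e.1 ∉ K ∧ e.2 ∉ K))
    (hγ : H.γ = N.γ) (hg : H.g = N.g)
    (hslack : H.slack = N.slack) (hpstar : H.pstar = N.pstar)
    (hq : H.q = fun i => if i = c then N.q c + ∑ j ∈ K, N.q j else N.q i) :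
    IsSolution H π f := by
  obtain ⟨h1, h2, h3⟩ := hsol
  refine ⟨?_, ?_, ?_⟩
  · intro e he
    rw [hE, Finset.mem_filter] at he
    rw [hγ, hg]
    exact h1 e he.1
  · intro i hi hins
    rw [hVs, Finset.mem_sdiff] at hi
    rw [hslack] at hins
    rw [hq, hE]
    simp only [Finset.filter_filter]
    by_cases hic : i = c
    · subst hic
      rw [if_pos rfl]
      -- replace q's by balances
      rw [← h2 i hc hcns]
      have hKq : ∑ j ∈ K, N.q j = ∑ j ∈ K,
          ((∑ e ∈ N.E.filter (fun e => e.2 = j), f e) -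
            (∑ e ∈ N.E.filter (fun e => e.1 = j), f e)) := by
        refine Finset.sum_congr rfl fun j hj => ?_
        rw [h2 j (hK hj) (hns j hj)]
      rw [hKq]
      simp only [Finset.sum_filter, Finset.sum_sub_distrib]
      rw [Finset.sum_comm (s := K) (t := N.E), Finset.sum_comm (s := K) (t := N.E)]
      simp only [← Finset.sum_sub_distrib]
      rw [← Finset.sum_add_distrib]
      refine Finset.sum_congr rfl fun e he => ?_
      have hsum2 : ∑ j ∈ K, (if e.2 = j then f e else 0) = if e.2 ∈ K then f e else 0 := by
        rw [Finset.sum_ite_eq K e.2 (fun _ => f e)]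
      have hsum1 : ∑ j ∈ K, (if e.1 = j then f e else 0) = if e.1 ∈ K then f e else 0 := by
        rw [Finset.sum_ite_eq K e.1 (fun _ => f e)]
      rw [Finset.sum_sub_distrib, hsum1, hsum2]
      obtain ⟨hs1, hs2⟩ := hsep e he
      by_cases h2K : e.2 ∈ K
      · have h2c : e.2 ≠ i := fun h => hcK (h ▸ h2K)
        rcases hs2 h2K with h1K | h1c
        · have h1c : e.1 ≠ i := fun h => hcK (h ▸ h1K)
          simp [h2K, h1K, h2c, h1c, hcK]
        · have h1K : e.1 ∉ K := h1c ▸ hcK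
          simp [h2K, h1K, h2c, h1c, hcK]
      · by_cases h1K : e.1 ∈ K
        · have h2c : e.2 = i := (hs1 h1K).resolve_left h2K
          have h1c : e.1 ≠ i := fun h => hcK (h ▸ h1K)
          simp [h2K, h1K, h2c, h1c, hcK]
        · by_cases h2c : e.2 = i <;> by_cases h1c : e.1 = i <;>
            simp [h2K, h1K, h2c, h1c, hcK]
    · rw [if_neg hic, ← h2 i hi.1 hins]
      have e2 : N.E.filter (fun e => (e.1 ∉ K ∧ e.2 ∉ K) ∧ e.2 = i) =
          N.E.filter (fun e => e.2 = i) := by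
        refine Finset.filter_congr fun e he => ?_
        simp only [and_iff_right_iff_imp]
        intro h2i
        have h2K : e.2 ∉ K := h2i ▸ hi.2
        refine ⟨fun h1K => ?_, h2K⟩
        rcases (hsep e he).1 h1K with h | h
        · exact h2K h
        · exact hic (h2i ▸ h)
      have e1 : N.E.filter (fun e => (e.1 ∉ K ∧ e.2 ∉ K) ∧ e.1 = i) =
          N.E.filter (fun e => e.1 = i) := by
        refine Finset.filter_congr fun e he => ?_
        simp only [and_iff_right_iff_imp]
        intro h1i
        have h1K : e.1 ∉ K := h1i ▸ hi.2
        refine ⟨h1K, fun h2K => ?_⟩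
        rcases (hsep e he).2 h2K with h | h
        · exact h1K h
        · exact hic (h1i ▸ h)
      rw [e1, e2]
  · intro i hi
    rw [hslack] at hi
    rw [hpstar]
    exact h3 i hi
end

section
/- Let a network be given on a finite directed graph with vertex set V and edge set E, let (π, f) be a solution of the network flow system NF_π, let c ∈ V be a non-slack vertex, and let K ⊆ V \ {c} be a set of vertices containing no slack vertices such that no edge of E joins a vertex of K to a vertex of V \ (K ∪ {c}) (in either direction). Consider the induced subnetwork on K ∪ {c} (edge set all edges of E with both endpoints in K ∪ {c}, same γ, g, and injections q*_i for i ∈ K) in which c is declared the unique slack vertex with prescribed potential π*_c := π(c). Then the restrictions of π to K ∪ {c} and of f to the edges of this subnetwork form a solution of the network flow system NF_π for this subnetwork. -/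
variable {V : Type} [DecidableEq V]

/-- If `(π, f)` solves `NF_π`, `c` is a non-slack vertex, and `K` is a set of
non-slack vertices not containing `c` with no edge joining `K` to the outside
of `K ∪ {c}`, then `(π, f)` (restricted) solves `NF_π` for the induced
subnetwork on `K ∪ {c}` in which `c` is the unique slack vertex with
prescribed potential `π(c)`. -/
theorem restriction_to_component_is_solution
    (N : Network V) (π : V → ℝ) (f : V × V → ℝ)
    (hsol : IsSolution N π f)
    (c : V) (hc : c ∈ N.Vs) (hcns : c ∉ N.slack)
    (K : Finset V) (hK : K ⊆ N.Vs) (hcK : c ∉ K)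
    (hsep : ∀ e ∈ N.E,
      (e.1 ∈ K → e.2 ∈ K ∨ e.2 = c) ∧ (e.2 ∈ K → e.1 ∈ K ∨ e.1 = c))
    (hns : ∀ v ∈ K, v ∉ N.slack)
    (GK : Network V)
    (hVs : GK.Vs = insert c K)
    (hE : GK.E = N.E.filter (fun e =>
      (e.1 ∈ K ∨ e.1 = c) ∧ (e.2 ∈ K ∨ e.2 = c)))
    (hγ : GK.γ = N.γ) (hg : GK.g = N.g)
    (hslack : GK.slack = {c})
    (hpstar : GK.pstar c = π c)
    (hq : ∀ i ∈ K, GK.q i = N.q i) :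
    IsSolution GK π f := by
  obtain ⟨h1, h2, _⟩ := hsol
  refine ⟨?_, ?_, ?_⟩
  · intro e he
    rw [hγ, hg]
    exact h1 e (by rw [hE] at he; exact (Finset.mem_filter.mp he).1)
  · intro i hi hi'
    rw [hVs] at hi
    rw [hslack, Finset.mem_singleton] at hi'
    have hiK : i ∈ K := by
      rcases Finset.mem_insert.mp hi with h | h
      · exact absurd h hi'
      · exact h
    have hin : GK.E.filter (fun e => e.2 = i) = N.E.filter (fun e => e.2 = i) := by
      rw [hE, Finset.filter_filter]
      apply Finset.filter_congr
      intro e he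
      constructor
      · rintro ⟨_, h⟩; exact h
      · intro h
        refine ⟨⟨(hsep e he).2 (h ▸ hiK), ?_⟩, h⟩
        left; exact h ▸ hiK
    have hout : GK.E.filter (fun e => e.1 = i) = N.E.filter (fun e => e.1 = i) := by
      rw [hE, Finset.filter_filter]
      apply Finset.filter_congr
      intro e he
      constructor
      · rintro ⟨_, h⟩; exact h
      · intro h
        refine ⟨⟨Or.inl (h ▸ hiK), (hsep e he).1 (h ▸ hiK)⟩, h⟩
    rw [hin, hout, hq i hiK]
    exact h2 i (hK hiK) (hns i hiK)
  · intro i hi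
    rw [hslack, Finset.mem_singleton] at hi
    subst hi
    exact hpstar.symm
end

section
/- Let a network be given on a finite directed graph with vertex set V and edge set E, let c ∈ V be a non-slack vertex, and let K ⊆ V \ {c} be a set of vertices containing no slack vertices such that no edge of E joins a vertex of K to a vertex of V \ (K ∪ {c}) (in either direction). Let H be the induced subnetwork on V \ K with injection at c replaced by q*_c + Σ_{i ∈ K} q*_i (all other data restricted), and suppose (π_H, f_H) is a solution of NF_π for H. Let G_K be the induced subnetwork on K ∪ {c} (same γ, g, injections q*_i for i ∈ K) in which c is the unique slack vertex with prescribed potential π_H(c), and suppose (π_K, f_K) is a solution of NF_π for G_K. Then the pair (π, f) defined by π = π_H on V \ K and π = π_K on K, and f = f_H on edges within V \ K and f = f_K on edges within K ∪ {c}, is a solution of the network flow system NF_π for the original network. -/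
variable {V : Type} [DecidableEq V]

/-- Gluing: let `c` be a non-slack vertex and `K` a set of non-slack vertices
not containing `c` with no edge joining `K` to the outside of `K ∪ {c}`.
If `(π_H, f_H)` solves `NF_π` for the induced subnetwork `H` on `V \ K` (with
injection at `c` replaced by `q*_c + Σ_{i ∈ K} q*_i`) and `(π_K, f_K)` solves
`NF_π` for the induced subnetwork `G_K` on `K ∪ {c}` in which `c` is the
unique slack vertex with prescribed potential `π_H(c)`, then the pair glued
from them solves `NF_π` for the original network. -/
theorem glued_solution
    (N : Network V)
    (c : V) (hc : c ∈ N.Vs) (hcns : c ∉ N.slack)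
    (K : Finset V) (hK : K ⊆ N.Vs) (hcK : c ∉ K)
    (hsep : ∀ e ∈ N.E,
      (e.1 ∈ K → e.2 ∈ K ∨ e.2 = c) ∧ (e.2 ∈ K → e.1 ∈ K ∨ e.1 = c))
    (hns : ∀ v ∈ K, v ∉ N.slack)
    (H : Network V)
    (hHVs : H.Vs = N.Vs \ K)
    (hHE : H.E = N.E.filter (fun e => e.1 ∉ K ∧ e.2 ∉ K))
    (hHγ : H.γ = N.γ) (hHg : H.g = N.g)
    (hHslack : H.slack = N.slack) (hHpstar : H.pstar = N.pstar)
    (hHq : H.q = fun i => if i = c then N.q c + ∑ j ∈ K, N.q j else N.q i)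
    (πH : V → ℝ) (fH : V × V → ℝ) (hHsol : IsSolution H πH fH)
    (GK : Network V)
    (hKVs : GK.Vs = insert c K)
    (hKE : GK.E = N.E.filter (fun e =>
      (e.1 ∈ K ∨ e.1 = c) ∧ (e.2 ∈ K ∨ e.2 = c)))
    (hKγ : GK.γ = N.γ) (hKg : GK.g = N.g)
    (hKslack : GK.slack = {c})
    (hKpstar : GK.pstar c = πH c)
    (hKq : ∀ i ∈ K, GK.q i = N.q i)
    (πK : V → ℝ) (fK : V × V → ℝ) (hKsol : IsSolution GK πK fK) :
    IsSolution N
      (fun v => if v ∈ K then πK v else πH v)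
      (fun e => if e.1 ∈ K ∨ e.2 ∈ K then fK e else fH e) := by

  obtain ⟨hH1, hH2, hH3⟩ := hHsol
  obtain ⟨hK1, hK2, hK3⟩ := hKsol
  have hπKc : πK c = πH c := by
    have := hK3 c (by rw [hKslack]; exact Finset.mem_singleton_self c)
    rw [this, hKpstar]
  refine ⟨?_, ?_, ?_⟩
  · -- edge equations
    intro e he
    by_cases h : e.1 ∈ K ∨ e.2 ∈ K
    · have heK : e ∈ GK.E := by
        rw [hKE, Finset.mem_filter]
        refine ⟨he, ?_, ?_⟩
        · rcases h with h1 | h2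
          · exact Or.inl h1
          · exact (hsep e he).2 h2
        · rcases h with h1 | h2
          · exact (hsep e he).1 h1
          · exact Or.inl h2
      have heq := hK1 e heK
      rw [hKγ, hKg] at heq
      have hend : ∀ v, (v ∈ K ∨ v = c) → (if v ∈ K then πK v else πH v) = πK v := by
        intro v hv
        rcases hv with hv | hv
        · rw [if_pos hv]
        · subst hv; rw [if_neg hcK, hπKc]
      have h1 := (Finset.mem_filter.mp (hKE ▸ heK)).2
      simp only [if_pos h]
      rw [hend e.1 h1.1, hend e.2 h1.2]
      exact heq
    · push_neg at h
      have heH : e ∈ H.E := by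
        rw [hHE, Finset.mem_filter]; exact ⟨he, h.1, h.2⟩
      have heq := hH1 e heH
      rw [hHγ, hHg] at heq
      simp only [if_neg (by push_neg; exact h : ¬(e.1 ∈ K ∨ e.2 ∈ K)),
        if_neg h.1, if_neg h.2]
      exact heq
  · -- flow conservation
    intro i hi hins
    by_cases hiK : i ∈ K
    · -- i ∈ K : conservation comes from GK
      have hEin : N.E.filter (fun e => e.2 = i) = GK.E.filter (fun e => e.2 = i) := by
        ext e
        simp only [Finset.mem_filter, hKE]
        constructor
        · rintro ⟨he, h2⟩
          exact ⟨⟨he, (hsep e he).2 (h2 ▸ hiK), Or.inl (h2 ▸ hiK)⟩, h2⟩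
        · rintro ⟨⟨he, _⟩, h2⟩
          exact ⟨he, h2⟩
      have hEout : N.E.filter (fun e => e.1 = i) = GK.E.filter (fun e => e.1 = i) := by
        ext e
        simp only [Finset.mem_filter, hKE]
        constructor
        · rintro ⟨he, h1⟩
          exact ⟨⟨he, Or.inl (h1 ▸ hiK), (hsep e he).1 (h1 ▸ hiK)⟩, h1⟩
        · rintro ⟨⟨he, _⟩, h1⟩
          exact ⟨he, h1⟩
      have hcons := hK2 i (by rw [hKVs]; exact Finset.mem_insert_of_mem hiK)
        (by rw [hKslack]; simp only [Finset.mem_singleton]; rintro rfl; exact hcK hiK)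
      rw [hKq i hiK] at hcons
      have hfin : ∑ e ∈ GK.E.filter (fun e => e.2 = i),
          (if e.1 ∈ K ∨ e.2 ∈ K then fK e else fH e)
          = ∑ e ∈ GK.E.filter (fun e => e.2 = i), fK e := by
        refine Finset.sum_congr rfl fun e heq => ?_
        have h2 := (Finset.mem_filter.mp heq).2
        exact if_pos (Or.inr (h2 ▸ hiK))
      have hfout : ∑ e ∈ GK.E.filter (fun e => e.1 = i),
          (if e.1 ∈ K ∨ e.2 ∈ K then fK e else fH e)
          = ∑ e ∈ GK.E.filter (fun e => e.1 = i), fK e := by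
        refine Finset.sum_congr rfl fun e heq => ?_
        have h1 := (Finset.mem_filter.mp heq).2
        exact if_pos (Or.inl (h1 ▸ hiK))
      rw [hEin, hEout, hfin, hfout]
      exact hcons
    · by_cases hic : i = c
      · subst hic
        -- H conservation at i
        have hcH := hH2 i (by rw [hHVs]; exact Finset.mem_sdiff.mpr ⟨hi, hcK⟩)
          (by rw [hHslack]; exact hins)
        rw [hHq] at hcH
        simp only [eq_self_iff_true, if_true] at hcH
        -- GK conservation summed over K
        have h1 : (∑ j ∈ K, ∑ e ∈ GK.E.filter (fun e => e.2 = j), fK e)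
            - (∑ j ∈ K, ∑ e ∈ GK.E.filter (fun e => e.1 = j), fK e)
            = ∑ j ∈ K, N.q j := by
          rw [← Finset.sum_sub_distrib]
          refine Finset.sum_congr rfl fun j hj => ?_
          have := hK2 j (by rw [hKVs]; exact Finset.mem_insert_of_mem hj)
            (by rw [hKslack]; simp only [Finset.mem_singleton]; rintro rfl; exact hcK hj)
          rw [hKq j hj] at this
          exact this
        -- collapse fibers
        have hin : (∑ j ∈ K, ∑ e ∈ GK.E.filter (fun e => e.2 = j), fK e)
            = ∑ e ∈ GK.E.filter (fun e => e.2 ∈ K), fK e := by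
          rw [← Finset.sum_fiberwise_of_maps_to (g := fun e : V × V => e.2) (t := K)
              (fun e he => (Finset.mem_filter.mp he).2) fK]
          refine Finset.sum_congr rfl fun j hj => ?_
          congr 1
          ext e
          simp only [Finset.mem_filter]
          constructor
          · rintro ⟨he, h⟩; exact ⟨⟨he, h ▸ hj⟩, h⟩
          · rintro ⟨⟨he, _⟩, h⟩; exact ⟨he, h⟩
        have hout : (∑ j ∈ K, ∑ e ∈ GK.E.filter (fun e => e.1 = j), fK e)
            = ∑ e ∈ GK.E.filter (fun e => e.1 ∈ K), fK e := by
          rw [← Finset.sum_fiberwise_of_maps_to (g := fun e : V × V => e.1) (t := K)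
              (fun e he => (Finset.mem_filter.mp he).2) fK]
          refine Finset.sum_congr rfl fun j hj => ?_
          congr 1
          ext e
          simp only [Finset.mem_filter]
          constructor
          · rintro ⟨he, h⟩; exact ⟨⟨he, h ▸ hj⟩, h⟩
          · rintro ⟨⟨he, _⟩, h⟩; exact ⟨he, h⟩
        rw [hin, hout] at h1
        -- split each by the other endpoint
        have hsin := Finset.sum_filter_add_sum_filter_not
          (GK.E.filter (fun e => e.2 ∈ K)) (fun e => e.1 ∈ K) fK
        have hsout := Finset.sum_filter_add_sum_filter_not
          (GK.E.filter (fun e => e.1 ∈ K)) (fun e => e.2 ∈ K) fK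
        -- internal edges coincide
        have hX : (GK.E.filter (fun e => e.2 ∈ K)).filter (fun e => e.1 ∈ K)
            = (GK.E.filter (fun e => e.1 ∈ K)).filter (fun e => e.2 ∈ K) := by
          ext e
          simp only [Finset.mem_filter]
          tauto
        rw [hX] at hsin
        -- set identifications
        have hA : (N.E.filter (fun e => e.2 = i)).filter (fun e => e.1 ∈ K)
            = (GK.E.filter (fun e => e.1 ∈ K)).filter (fun e => ¬ e.2 ∈ K) := by
          ext e
          simp only [Finset.mem_filter, hKE]
          constructor
          · rintro ⟨⟨he, h2⟩, h1⟩
            exact ⟨⟨⟨he, Or.inl h1, Or.inr h2⟩, h1⟩, h2 ▸ hcK⟩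
          · rintro ⟨⟨⟨he, _, h2⟩, h1⟩, h2'⟩
            rcases h2 with h | h
            · exact absurd h h2'
            · exact ⟨⟨he, h⟩, h1⟩
        have hB : (N.E.filter (fun e => e.2 = i)).filter (fun e => ¬ e.1 ∈ K)
            = H.E.filter (fun e => e.2 = i) := by
          ext e
          simp only [Finset.mem_filter, hHE]
          constructor
          · rintro ⟨⟨he, h2⟩, h1⟩
            exact ⟨⟨he, h1, h2 ▸ hcK⟩, h2⟩
          · rintro ⟨⟨he, h1, _⟩, h2⟩
            exact ⟨⟨he, h2⟩, h1⟩
        have hC : (N.E.filter (fun e => e.1 = i)).filter (fun e => e.2 ∈ K)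
            = (GK.E.filter (fun e => e.2 ∈ K)).filter (fun e => ¬ e.1 ∈ K) := by
          ext e
          simp only [Finset.mem_filter, hKE]
          constructor
          · rintro ⟨⟨he, h1⟩, h2⟩
            exact ⟨⟨⟨he, Or.inr h1, Or.inl h2⟩, h2⟩, h1 ▸ hcK⟩
          · rintro ⟨⟨⟨he, h1, _⟩, h2⟩, h1'⟩
            rcases h1 with h | h
            · exact absurd h h1'
            · exact ⟨⟨he, h⟩, h2⟩
        have hD : (N.E.filter (fun e => e.1 = i)).filter (fun e => ¬ e.2 ∈ K)
            = H.E.filter (fun e => e.1 = i) := by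
          ext e
          simp only [Finset.mem_filter, hHE]
          constructor
          · rintro ⟨⟨he, h1⟩, h2⟩
            exact ⟨⟨he, h1 ▸ hcK, h2⟩, h1⟩
          · rintro ⟨⟨he, _, h2⟩, h1⟩
            exact ⟨⟨he, h1⟩, h2⟩
        -- split the goal sums
        rw [← Finset.sum_filter_add_sum_filter_not (N.E.filter (fun e => e.2 = i))
            (fun e => e.1 ∈ K),
          ← Finset.sum_filter_add_sum_filter_not (N.E.filter (fun e => e.1 = i))
            (fun e => e.2 ∈ K)]
        rw [hA, hB, hC, hD]
        -- identify glued flows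
        have eA : ∑ e ∈ (GK.E.filter (fun e => e.1 ∈ K)).filter (fun e => ¬ e.2 ∈ K),
            (if e.1 ∈ K ∨ e.2 ∈ K then fK e else fH e)
            = ∑ e ∈ (GK.E.filter (fun e => e.1 ∈ K)).filter (fun e => ¬ e.2 ∈ K), fK e := by
          refine Finset.sum_congr rfl fun e he => ?_
          have h1 := (Finset.mem_filter.mp (Finset.mem_filter.mp he).1).2
          exact if_pos (Or.inl h1)
        have eB : ∑ e ∈ H.E.filter (fun e => e.2 = i),
            (if e.1 ∈ K ∨ e.2 ∈ K then fK e else fH e)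
            = ∑ e ∈ H.E.filter (fun e => e.2 = i), fH e := by
          refine Finset.sum_congr rfl fun e he => ?_
          have hm := (Finset.mem_filter.mp (hHE ▸ (Finset.mem_filter.mp he).1)).2
          exact if_neg (by push_neg; exact hm)
        have eC : ∑ e ∈ (GK.E.filter (fun e => e.2 ∈ K)).filter (fun e => ¬ e.1 ∈ K),
            (if e.1 ∈ K ∨ e.2 ∈ K then fK e else fH e)
            = ∑ e ∈ (GK.E.filter (fun e => e.2 ∈ K)).filter (fun e => ¬ e.1 ∈ K), fK e := by
          refine Finset.sum_congr rfl fun e he => ?_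
          have h2 := (Finset.mem_filter.mp (Finset.mem_filter.mp he).1).2
          exact if_pos (Or.inr h2)
        have eD : ∑ e ∈ H.E.filter (fun e => e.1 = i),
            (if e.1 ∈ K ∨ e.2 ∈ K then fK e else fH e)
            = ∑ e ∈ H.E.filter (fun e => e.1 = i), fH e := by
          refine Finset.sum_congr rfl fun e he => ?_
          have hm := (Finset.mem_filter.mp (hHE ▸ (Finset.mem_filter.mp he).1)).2
          exact if_neg (by push_neg; exact hm)
        rw [eA, eB, eC, eD]
        linarith [hcH, h1, hsin, hsout]
      · -- i outside K ∪ {c} : conservation comes from H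
        have hEin : N.E.filter (fun e => e.2 = i) = H.E.filter (fun e => e.2 = i) := by
          ext e
          simp only [Finset.mem_filter, hHE]
          constructor
          · rintro ⟨he, h2⟩
            refine ⟨⟨he, ?_, h2 ▸ hiK⟩, h2⟩
            intro h1
            rcases (hsep e he).1 h1 with h | h
            · exact hiK (h2 ▸ h)
            · exact hic (h2 ▸ h)
          · rintro ⟨⟨he, _⟩, h2⟩
            exact ⟨he, h2⟩
        have hEout : N.E.filter (fun e => e.1 = i) = H.E.filter (fun e => e.1 = i) := by
          ext e
          simp only [Finset.mem_filter, hHE]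
          constructor
          · rintro ⟨he, h1⟩
            refine ⟨⟨he, h1 ▸ hiK, ?_⟩, h1⟩
            intro h2
            rcases (hsep e he).2 h2 with h | h
            · exact hiK (h1 ▸ h)
            · exact hic (h1 ▸ h)
          · rintro ⟨⟨he, _⟩, h1⟩
            exact ⟨he, h1⟩
        have hcons := hH2 i (by rw [hHVs]; exact Finset.mem_sdiff.mpr ⟨hi, hiK⟩)
          (by rw [hHslack]; exact hins)
        rw [hHq] at hcons
        simp only [if_neg hic] at hcons
        have hfin : ∑ e ∈ H.E.filter (fun e => e.2 = i),
            (if e.1 ∈ K ∨ e.2 ∈ K then fK e else fH e)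
            = ∑ e ∈ H.E.filter (fun e => e.2 = i), fH e := by
          refine Finset.sum_congr rfl fun e heq => ?_
          have hm := (Finset.mem_filter.mp (hHE ▸ (Finset.mem_filter.mp heq).1)).2
          exact if_neg (by push_neg; exact hm)
        have hfout : ∑ e ∈ H.E.filter (fun e => e.1 = i),
            (if e.1 ∈ K ∨ e.2 ∈ K then fK e else fH e)
            = ∑ e ∈ H.E.filter (fun e => e.1 = i), fH e := by
          refine Finset.sum_congr rfl fun e heq => ?_
          have hm := (Finset.mem_filter.mp (hHE ▸ (Finset.mem_filter.mp heq).1)).2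
          exact if_neg (by push_neg; exact hm)
        rw [hEin, hEout, hfin, hfout]
        exact hcons
  · -- slack potentials
    intro i hi
    have hiK : i ∉ K := fun h => hns i h hi
    simp only [if_neg hiK]
    rw [hH3 i (hHslack ▸ hi), hHpstar]
end

section
/- Let a network be given on a finite directed graph with vertex set V and edge set E, let c ∈ V be a non-slack vertex, and let K_1, …, K_m (m ≥ 2) be pairwise disjoint nonempty subsets of V \ {c} whose union is V \ {c}, such that no edge of E joins K_i to K_j for i ≠ j (in either direction). Define the augmented network G' as follows: its vertex set is V together with m new non-slack vertices c_1, …, c_m each with injection 0; every edge of E with neither endpoint equal to c is kept with unchanged data; every edge (v, c) ∈ E with v ∈ K_i is replaced by an edge (v, c_i) and every edge (c, v) ∈ E with v ∈ K_i is replaced by an edge (c_i, v), each with the same γ and g as the original edge; and m new edges (c, c_1), …, (c, c_m) are added, each with γ = 1 and g identically zero; all other data (slack set, slack potentials, injections) are unchanged. Then the map sending a solution (π', f') of NF_π on G' to the pair (π, f) on the original network — where π is the restriction of π' to V and f assigns to each original edge the flow f' of its counterpart in G' — is a bijection from the set of solutions of NF_π on G' onto the set of solutions of NF_π on the original network. 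-/
variable {V : Type} [DecidableEq V]

/-- The set of solutions of `NF_π` for `N`, normalized to vanish outside the
vertices and edges of `N` (so that a solution is, in effect, a pair of
functions `π : V(N) → ℝ` and `f : E(N) → ℝ`). -/
def SolSet (N : Network V) : Set ((V → ℝ) × (V × V → ℝ)) :=
  {p | IsSolution N p.1 p.2 ∧
    (∀ v, v ∉ N.Vs → p.1 v = 0) ∧ (∀ e, e ∉ N.E → p.2 e = 0)}

/-- The map sending a solution `(π', f')` of the augmented network to the pair
`(π, f)` on the original network `N`: `π` is the restriction of `π'` to the
vertices of `N`, and `f` assigns to each original edge the flow `f'` of its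
counterpart in the augmented network (an edge incident to `c` from the side of
`K i` is redirected through the replica `cnew i`; since the `K i` are pairwise
disjoint, exactly one summand below is active). -/
def restrictSol (N : Network V) (c : V) (m : ℕ) (K : Fin m → Finset V)
    (cnew : Fin m → V) (p : (V → ℝ) × (V × V → ℝ)) :
    (V → ℝ) × (V × V → ℝ) :=
  (fun v => if v ∈ N.Vs then p.1 v else 0,
   fun e =>
    if e ∈ N.E then
      if e.2 = c then ∑ i : Fin m, (if e.1 ∈ K i then p.2 (e.1, cnew i) else 0)
      else if e.1 = c then
        ∑ i : Fin m, (if e.2 ∈ K i then p.2 (cnew i, e.2) else 0)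
      else p.2 e
    else 0)

noncomputable def cnF (m : ℕ) (K : Fin m → Finset V) (cnew : Fin m → V) (v : V) : V :=
  if h : ∃ i, v ∈ K i then cnew h.choose else v

noncomputable def redir (c : V) (m : ℕ) (K : Fin m → Finset V) (cnew : Fin m → V)
    (e : V × V) : V × V :=
  if e.2 = c then (e.1, cnF m K cnew e.1)
  else if e.1 = c then (cnF m K cnew e.2, e.2) else e

def unredir (N : Network V) (c : V) (e : V × V) : V × V :=
  if e.2 ∉ N.Vs then (e.1, c) else if e.1 ∉ N.Vs then (c, e.2) else e

noncomputable def liftSol (N G' : Network V) (c : V) (m : ℕ) (K : Fin m → Finset V)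
    (cnew : Fin m → V) (p : (V → ℝ) × (V × V → ℝ)) : (V → ℝ) × (V × V → ℝ) :=
  (fun v => if v ∈ N.Vs then p.1 v else if v ∈ G'.Vs then p.1 c else 0,
   fun e =>
     if e ∈ G'.E then
       if e.1 = c ∧ e.2 ∉ N.Vs then
         ∑ i, if e.2 = cnew i then
           ((∑ e' ∈ N.E.filter (fun e' => e'.1 = c ∧ e'.2 ∈ K i), p.2 e') -
            (∑ e' ∈ N.E.filter (fun e' => e'.2 = c ∧ e'.1 ∈ K i), p.2 e'))
         else 0
       else p.2 (unredir N c e)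
     else 0)


set_option maxHeartbeats 2000000 in
/-- Let `c` be a non-slack vertex and `K 0, …, K (m−1)` (`m ≥ 2`) pairwise
disjoint nonempty sets partitioning `V(N) \ {c}` with no edge joining
different parts. Let `G'` be the augmented network obtained by adding replicas
`cnew i` of `c` with zero injection, redirecting each edge between `c` and
`K i` through `cnew i` (with unchanged `γ`, `g`), and adding the new edges
`(c, cnew i)` with `γ = 1` and `g ≡ 0`. Then the restriction map is a
bijection from the solutions of `NF_π` on `G'` onto those on `N`. -/
theorem augmented_network_solution_bijection
    (N : Network V)
    (c : V) (hc : c ∈ N.Vs) (hcns : c ∉ N.slack) (hloop : (c, c) ∉ N.E)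
    (m : ℕ) (hm : 2 ≤ m)
    (K : Fin m → Finset V)
    (hKne : ∀ i, (K i).Nonempty)
    (hKdisj : ∀ i j, i ≠ j → Disjoint (K i) (K j))
    (hKcover : ∀ v : V, (v ∈ N.Vs ∧ v ≠ c) ↔ ∃ i, v ∈ K i)
    (hsep : ∀ e ∈ N.E, ∀ i j, i ≠ j → ¬(e.1 ∈ K i ∧ e.2 ∈ K j))
    (cnew : Fin m → V)
    (hcnew_inj : Function.Injective cnew)
    (hcnew_new : ∀ i, cnew i ∉ N.Vs)
    (G' : Network V)
    (hVs' : G'.Vs = N.Vs ∪ Finset.image cnew Finset.univ)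
    (hE' : ∀ e : V × V, e ∈ G'.E ↔
      ((e ∈ N.E ∧ e.1 ≠ c ∧ e.2 ≠ c) ∨
       (∃ i, e.2 = cnew i ∧ (e.1, c) ∈ N.E ∧ e.1 ∈ K i) ∨
       (∃ i, e.1 = cnew i ∧ (c, e.2) ∈ N.E ∧ e.2 ∈ K i) ∨
       (∃ i, e = (c, cnew i))))
    (hkeep : ∀ e ∈ N.E, e.1 ≠ c → e.2 ≠ c → G'.γ e = N.γ e ∧ G'.g e = N.g e)
    (hin : ∀ i, ∀ v ∈ K i, (v, c) ∈ N.E →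
      G'.γ (v, cnew i) = N.γ (v, c) ∧ G'.g (v, cnew i) = N.g (v, c))
    (hout : ∀ i, ∀ v ∈ K i, (c, v) ∈ N.E →
      G'.γ (cnew i, v) = N.γ (c, v) ∧ G'.g (cnew i, v) = N.g (c, v))
    (hnew : ∀ i, G'.γ (c, cnew i) = 1 ∧ ∀ x : ℝ, G'.g (c, cnew i) x = 0)
    (hslack' : G'.slack = N.slack)
    (hpstar' : G'.pstar = N.pstar)
    (hq' : ∀ v ∈ N.Vs, G'.q v = N.q v)
    (hqnew : ∀ i, G'.q (cnew i) = 0) :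
    Set.BijOn (restrictSol N c m K cnew) (SolSet G') (SolSet N) := by
  classical
  -- basic facts
  have hKV : ∀ {i : Fin m} {v : V}, v ∈ K i → v ∈ N.Vs ∧ v ≠ c :=
    fun {i v} h => (hKcover v).mpr ⟨i, h⟩
  have hKuniq : ∀ {v : V} {i j : Fin m}, v ∈ K i → v ∈ K j → i = j := by
    intro v i j hi hj
    by_contra hne
    exact (Finset.disjoint_left.mp (hKdisj i j hne) hi) hj
  have hcne : ∀ i, cnew i ≠ c := fun i h => hcnew_new i (h ▸ hc)
  have hKcn : ∀ (i j : Fin m) (v : V), v ∈ K i → v ≠ cnew j :=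
    fun i j v hv h => hcnew_new j (h ▸ (hKV hv).1)
  have hcnE : ∀ i, (c, cnew i) ∈ G'.E :=
    fun i => (hE' _).mpr (Or.inr (Or.inr (Or.inr ⟨i, rfl⟩)))
  have hcn : ∀ {i : Fin m} {v : V}, v ∈ K i → cnF m K cnew v = cnew i := by
    intro i v hv
    have h : ∃ j, v ∈ K j := ⟨i, hv⟩
    rw [cnF, dif_pos h]
    exact congrArg cnew (hKuniq h.choose_spec hv)
  have hind : ∀ {v : V} {i : Fin m} (x : Fin m → ℝ), v ∈ K i →
      (∑ j, if v ∈ K j then x j else 0) = x i := by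
    intro v i x hv
    rw [Finset.sum_eq_single i]
    · simp [hv]
    · intro j _ hj
      have : v ∉ K j := fun h => hj (hKuniq h hv)
      simp [this]
    · simp
  have hindcn : ∀ {i : Fin m} (x : Fin m → ℝ),
      (∑ j, if cnew i = cnew j then x j else 0) = x i := by
    intro i x
    rw [Finset.sum_eq_single i]
    · simp
    · intro j _ hj
      have : cnew i ≠ cnew j := fun h => hj (hcnew_inj h).symm
      simp [this]
    · simp
  -- the index of a vertex adjacent to c
  have hKidx : ∀ e ∈ N.E, e.2 = c → ∃ i, e.1 ∈ K i := by
    intro e he h2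
    apply (hKcover e.1).mp
    refine ⟨(N.edge_mem e he).1, fun h1 => hloop ?_⟩
    have : e = (c, c) := Prod.ext h1 h2
    exact this ▸ he
  have hKidx' : ∀ e ∈ N.E, e.1 = c → e.2 ≠ c → ∃ i, e.2 ∈ K i := by
    intro e he h1 h2
    exact (hKcover e.2).mp ⟨(N.edge_mem e he).2, h2⟩
  -- redirected edges are in G'
  have hredE : ∀ e ∈ N.E, redir c m K cnew e ∈ G'.E := by
    intro e he
    by_cases h2 : e.2 = c
    · obtain ⟨i, hi⟩ := hKidx e he h2
      rw [redir, if_pos h2]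
      exact (hE' _).mpr (Or.inr (Or.inl ⟨i, hcn hi, h2 ▸ he, hi⟩))
    · by_cases h1 : e.1 = c
      · obtain ⟨i, hi⟩ := hKidx' e he h1 h2
        rw [redir, if_neg h2, if_pos h1]
        exact (hE' _).mpr (Or.inr (Or.inr (Or.inl ⟨i, hcn hi, h1 ▸ he, hi⟩)))
      · rw [redir, if_neg h2, if_neg h1]
        exact (hE' _).mpr (Or.inl ⟨he, h1, h2⟩)
  -- L0 : restricted flow = flow of redirected edge
  have hL0 : ∀ (p : (V → ℝ) × (V × V → ℝ)), ∀ e ∈ N.E,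
      (restrictSol N c m K cnew p).2 e = p.2 (redir c m K cnew e) := by
    intro p e he
    by_cases h2 : e.2 = c
    · obtain ⟨i, hi⟩ := hKidx e he h2
      simp only [restrictSol, redir, if_pos he, if_pos h2]
      rw [hind (fun j => p.2 (e.1, cnew j)) hi, hcn hi]
    · by_cases h1 : e.1 = c
      · obtain ⟨i, hi⟩ := hKidx' e he h1 h2
        simp only [restrictSol, redir, if_pos he, if_neg h2, if_pos h1]
        rw [hind (fun j => p.2 (cnew j, e.2)) hi, hcn hi]
      · simp only [restrictSol, redir, if_pos he, if_neg h2, if_neg h1]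
  -- L1 : incoming sums at an ordinary vertex
  have hL1 : ∀ (F : V × V → ℝ) (v : V), v ∈ N.Vs → v ≠ c →
      (∑ e ∈ N.E.filter (fun e => e.2 = v), F (redir c m K cnew e)) =
      (∑ e ∈ G'.E.filter (fun e => e.2 = v), F e) := by
    intro F v hv hvc
    refine Finset.sum_nbij' (redir c m K cnew) (unredir N c) ?_ ?_ ?_ ?_ ?_
    · intro a ha
      obtain ⟨haE, ha2⟩ := Finset.mem_filter.mp ha
      refine Finset.mem_filter.mpr ⟨hredE a haE, ?_⟩
      rw [redir, if_neg (by rw [ha2]; exact hvc)]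
      by_cases h1 : a.1 = c <;> simp [h1, ha2]
    · intro b hb
      obtain ⟨hbE, hb2⟩ := Finset.mem_filter.mp hb
      rcases (hE' b).mp hbE with ⟨hbN, h1, h2⟩ | ⟨j, hj2, _, _⟩ | ⟨j, hj1, hjN, hjK⟩ | ⟨j, hj⟩
      · refine Finset.mem_filter.mpr ⟨?_, ?_⟩
        · rw [unredir, if_neg (not_not.mpr (N.edge_mem b hbN).2),
            if_neg (not_not.mpr (N.edge_mem b hbN).1)]
          exact hbN
        · rw [unredir, if_neg (not_not.mpr (N.edge_mem b hbN).2),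
            if_neg (not_not.mpr (N.edge_mem b hbN).1)]
          exact hb2
      · exact absurd (hb2 ▸ hv) (hj2 ▸ hcnew_new j)
      · have : unredir N c b = (c, b.2) := by
          rw [unredir, if_neg (not_not.mpr (hb2 ▸ hv)), if_pos (hj1 ▸ hcnew_new j)]
        rw [this]
        exact Finset.mem_filter.mpr ⟨hjN, hb2⟩
      · exact absurd (hb2 ▸ hv) (by rw [hj]; exact hcnew_new j)
    · intro a ha
      obtain ⟨haE, ha2⟩ := Finset.mem_filter.mp ha
      have hvc2 : a.2 ≠ c := ha2 ▸ hvc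
      rw [redir, if_neg hvc2]
      by_cases h1 : a.1 = c
      · obtain ⟨i, hi⟩ := hKidx' a haE h1 hvc2
        rw [if_pos h1, hcn hi, unredir]
        simp only
        rw [if_neg (not_not.mpr (ha2 ▸ hv)), if_pos (hcnew_new i)]
        exact (Prod.ext h1.symm rfl)
      · rw [if_neg h1, unredir, if_neg (not_not.mpr (N.edge_mem a haE).2),
          if_neg (not_not.mpr (N.edge_mem a haE).1)]
    · intro b hb
      obtain ⟨hbE, hb2⟩ := Finset.mem_filter.mp hb
      rcases (hE' b).mp hbE with ⟨hbN, h1, h2⟩ | ⟨j, hj2, _, _⟩ | ⟨j, hj1, hjN, hjK⟩ | ⟨j, hj⟩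
      · rw [unredir, if_neg (not_not.mpr (N.edge_mem b hbN).2),
          if_neg (not_not.mpr (N.edge_mem b hbN).1), redir, if_neg h2, if_neg h1]
      · exact absurd (hb2 ▸ hv) (hj2 ▸ hcnew_new j)
      · have h2c : b.2 ≠ c := (hKV hjK).2
        rw [unredir, if_neg (not_not.mpr (hb2 ▸ hv)), if_pos (hj1 ▸ hcnew_new j)]
        simp [redir, h2c, hcn hjK, Prod.ext_iff, hj1]
      · exact absurd (hb2 ▸ hv) (by rw [hj]; exact hcnew_new j)
    · intro a _; rfl
  -- L2 : outgoing sums at an ordinary vertex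
  have hL2 : ∀ (F : V × V → ℝ) (v : V), v ∈ N.Vs → v ≠ c →
      (∑ e ∈ N.E.filter (fun e => e.1 = v), F (redir c m K cnew e)) =
      (∑ e ∈ G'.E.filter (fun e => e.1 = v), F e) := by
    intro F v hv hvc
    refine Finset.sum_nbij' (redir c m K cnew) (unredir N c) ?_ ?_ ?_ ?_ ?_
    · intro a ha
      obtain ⟨haE, ha1⟩ := Finset.mem_filter.mp ha
      refine Finset.mem_filter.mpr ⟨hredE a haE, ?_⟩
      by_cases h2 : a.2 = c
      · rw [redir, if_pos h2]; exact ha1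
      · rw [redir, if_neg h2, if_neg (ha1 ▸ hvc)]; exact ha1
    · intro b hb
      obtain ⟨hbE, hb1⟩ := Finset.mem_filter.mp hb
      rcases (hE' b).mp hbE with ⟨hbN, h1, h2⟩ | ⟨j, hj2, hjN, hjK⟩ | ⟨j, hj1, _, _⟩ | ⟨j, hj⟩
      · rw [unredir, if_neg (not_not.mpr (N.edge_mem b hbN).2),
          if_neg (not_not.mpr (N.edge_mem b hbN).1)]
        exact Finset.mem_filter.mpr ⟨hbN, hb1⟩
      · have : unredir N c b = (b.1, c) := by
          rw [unredir, if_pos (hj2 ▸ hcnew_new j)]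
        rw [this]
        exact Finset.mem_filter.mpr ⟨hjN, hb1⟩
      · exact absurd (hb1 ▸ hv) (hj1 ▸ hcnew_new j)
      · exact absurd (show v = c by rw [← hb1, hj]) hvc
    · intro a ha
      obtain ⟨haE, ha1⟩ := Finset.mem_filter.mp ha
      by_cases h2 : a.2 = c
      · obtain ⟨i, hi⟩ := hKidx a haE h2
        rw [redir, if_pos h2, hcn hi, unredir]
        simp only
        rw [if_pos (hcnew_new i), ← h2]
      · rw [redir, if_neg h2, if_neg (ha1 ▸ hvc), unredir,
          if_neg (not_not.mpr (N.edge_mem a haE).2), if_neg (not_not.mpr (N.edge_mem a haE).1)]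
    · intro b hb
      obtain ⟨hbE, hb1⟩ := Finset.mem_filter.mp hb
      rcases (hE' b).mp hbE with ⟨hbN, h1, h2⟩ | ⟨j, hj2, hjN, hjK⟩ | ⟨j, hj1, _, _⟩ | ⟨j, hj⟩
      · rw [unredir, if_neg (not_not.mpr (N.edge_mem b hbN).2),
          if_neg (not_not.mpr (N.edge_mem b hbN).1), redir, if_neg h2, if_neg h1]
      · rw [unredir, if_pos (hj2 ▸ hcnew_new j)]
        simp [redir, hcn hjK, Prod.ext_iff, hj2]
      · exact absurd (hb1 ▸ hv) (hj1 ▸ hcnew_new j)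
      · exact absurd (show v = c by rw [← hb1, hj]) hvc
    · intro a _; rfl
  -- L3a : incoming sum at a replica vertex
  have hL3a : ∀ (F : V × V → ℝ) (i : Fin m),
      (∑ e ∈ G'.E.filter (fun e => e.2 = cnew i), F e) =
      F (c, cnew i) + ∑ e ∈ N.E.filter (fun e => e.2 = c ∧ e.1 ∈ K i), F (e.1, cnew i) := by
    intro F i
    have hset : G'.E.filter (fun e => e.2 = cnew i) =
        insert (c, cnew i)
          ((N.E.filter (fun e => e.2 = c ∧ e.1 ∈ K i)).image (fun e => (e.1, cnew i))) := by
      ext b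
      simp only [Finset.mem_filter, Finset.mem_insert, Finset.mem_image]
      constructor
      · rintro ⟨hbE, hb2⟩
        rcases (hE' b).mp hbE with ⟨hbN, _, _⟩ | ⟨j, hj2, hjN, hjK⟩ | ⟨j, _, _, hjK⟩ | ⟨j, hj⟩
        · exact absurd (hb2 ▸ (N.edge_mem b hbN).2) (hcnew_new i)
        · have hji : j = i := hcnew_inj (hj2 ▸ hb2)
          refine Or.inr ⟨(b.1, c), ⟨hjN, rfl, hji ▸ hjK⟩, Prod.ext rfl hb2.symm⟩
        · exact absurd (hb2 ▸ (hKV hjK).1) (hcnew_new i)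
        · have hji : j = i := hcnew_inj ((by rw [hj] at hb2; exact hb2) : cnew j = cnew i)
          exact Or.inl (by rw [hj, hji])
      · rintro (rfl | ⟨a, ⟨haE, ha2, haK⟩, rfl⟩)
        · exact ⟨hcnE i, rfl⟩
        · refine ⟨(hE' _).mpr (Or.inr (Or.inl ⟨i, rfl, ?_, haK⟩)), rfl⟩
          exact (Prod.ext rfl ha2.symm : (a.1, c) = a) ▸ haE
    rw [hset, Finset.sum_insert, Finset.sum_image]
    · intro x hx y hy hxy
      obtain ⟨_, hx2, _⟩ := Finset.mem_filter.mp hx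
      obtain ⟨_, hy2, _⟩ := Finset.mem_filter.mp hy
      rw [Prod.mk.injEq] at hxy
      exact Prod.ext hxy.1 (hx2.trans hy2.symm)
    · intro hmem
      obtain ⟨a, haf, hae⟩ := Finset.mem_image.mp hmem
      obtain ⟨_, _, haK⟩ := Finset.mem_filter.mp haf
      exact (hKV haK).2 (congrArg Prod.fst hae)
  -- L3b : outgoing sum at a replica vertex
  have hL3b : ∀ (F : V × V → ℝ) (i : Fin m),
      (∑ e ∈ G'.E.filter (fun e => e.1 = cnew i), F e) =
      ∑ e ∈ N.E.filter (fun e => e.1 = c ∧ e.2 ∈ K i), F (cnew i, e.2) := by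
    intro F i
    have hset : G'.E.filter (fun e => e.1 = cnew i) =
        ((N.E.filter (fun e => e.1 = c ∧ e.2 ∈ K i)).image (fun e => (cnew i, e.2))) := by
      ext b
      simp only [Finset.mem_filter, Finset.mem_image]
      constructor
      · rintro ⟨hbE, hb1⟩
        rcases (hE' b).mp hbE with ⟨hbN, _, _⟩ | ⟨j, _, _, hjK⟩ | ⟨j, hj1, hjN, hjK⟩ | ⟨j, hj⟩
        · exact absurd (hb1 ▸ (N.edge_mem b hbN).1) (hcnew_new i)
        · exact absurd (hb1 ▸ (hKV hjK).1) (hcnew_new i)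
        · have hji : j = i := hcnew_inj (hj1 ▸ hb1)
          exact ⟨(c, b.2), ⟨hjN, rfl, hji ▸ hjK⟩, Prod.ext hb1.symm rfl⟩
        · simp only [hj] at hb1
          exact absurd hb1.symm (hcne i)
      · rintro ⟨a, ⟨haE, ha1, haK⟩, rfl⟩
        refine ⟨(hE' _).mpr (Or.inr (Or.inr (Or.inl ⟨i, rfl, ?_, haK⟩))), rfl⟩
        exact (Prod.ext ha1.symm rfl : (c, a.2) = a) ▸ haE
    rw [hset, Finset.sum_image]
    intro x hx y hy hxy
    obtain ⟨_, hx1, _⟩ := Finset.mem_filter.mp hx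
    obtain ⟨_, hy1, _⟩ := Finset.mem_filter.mp hy
    rw [Prod.mk.injEq] at hxy
    exact Prod.ext (hx1.trans hy1.symm) hxy.2
  -- L4a : nothing enters c in G'
  have hL4a : G'.E.filter (fun e => e.2 = c) = ∅ := by
    ext b
    simp only [Finset.mem_filter, Finset.notMem_empty, iff_false, not_and]
    intro hbE hb2
    rcases (hE' b).mp hbE with ⟨_, _, h2⟩ | ⟨j, hj2, _, _⟩ | ⟨j, _, _, hjK⟩ | ⟨j, hj⟩
    · exact h2 hb2
    · exact hcne j (hj2 ▸ hb2)
    · exact (hKV hjK).2 hb2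
    · exact hcne j (by rw [hj] at hb2; exact hb2)
  -- L4b : edges leaving c in G'
  have hL4b : ∀ (F : V × V → ℝ),
      (∑ e ∈ G'.E.filter (fun e => e.1 = c), F e) = ∑ i, F (c, cnew i) := by
    intro F
    have hset : G'.E.filter (fun e => e.1 = c) =
        (Finset.univ : Finset (Fin m)).image (fun i => (c, cnew i)) := by
      ext b
      simp only [Finset.mem_filter, Finset.mem_image, Finset.mem_univ, true_and]
      constructor
      · rintro ⟨hbE, hb1⟩
        rcases (hE' b).mp hbE with ⟨_, h1, _⟩ | ⟨j, _, _, hjK⟩ | ⟨j, hj1, _, _⟩ | ⟨j, hj⟩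
        · exact absurd hb1 h1
        · exact absurd hb1 (hKV hjK).2
        · exact absurd (hb1 ▸ hc) (hj1 ▸ hcnew_new j)
        · exact ⟨j, hj.symm⟩
      · rintro ⟨j, rfl⟩
        exact ⟨hcnE j, rfl⟩
    rw [hset, Finset.sum_image]
    intro x _ y _ hxy
    exact hcnew_inj (congrArg Prod.snd hxy)
  -- L5a : partition of the edges entering c
  have hL5a : ∀ (F : V × V → ℝ),
      (∑ e ∈ N.E.filter (fun e => e.2 = c), F e) =
      ∑ i, ∑ e ∈ N.E.filter (fun e => e.2 = c ∧ e.1 ∈ K i), F e := by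
    intro F
    have h2 : (∑ i, ∑ e ∈ N.E.filter (fun e => e.2 = c ∧ e.1 ∈ K i), F e)
        = ∑ i, ∑ e ∈ N.E.filter (fun e => e.2 = c), (if e.1 ∈ K i then F e else 0) :=
      Finset.sum_congr rfl (fun i _ => by rw [← Finset.filter_filter, Finset.sum_filter])
    rw [h2, Finset.sum_comm]
    apply Finset.sum_congr rfl
    intro e he
    obtain ⟨heE, he2⟩ := Finset.mem_filter.mp he
    obtain ⟨i, hi⟩ := hKidx e heE he2
    exact (hind (fun _ => F e) hi).symm
  -- L5b : partition of the edges leaving c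
  have hL5b : ∀ (F : V × V → ℝ),
      (∑ e ∈ N.E.filter (fun e => e.1 = c), F e) =
      ∑ i, ∑ e ∈ N.E.filter (fun e => e.1 = c ∧ e.2 ∈ K i), F e := by
    intro F
    have h2 : (∑ i, ∑ e ∈ N.E.filter (fun e => e.1 = c ∧ e.2 ∈ K i), F e)
        = ∑ i, ∑ e ∈ N.E.filter (fun e => e.1 = c), (if e.2 ∈ K i then F e else 0) :=
      Finset.sum_congr rfl (fun i _ => by rw [← Finset.filter_filter, Finset.sum_filter])
    rw [h2, Finset.sum_comm]
    apply Finset.sum_congr rfl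
    intro e he
    obtain ⟨heE, he1⟩ := Finset.mem_filter.mp he
    have he2 : e.2 ≠ c := fun h => hloop ((Prod.ext he1 h : e = (c, c)) ▸ heE)
    obtain ⟨i, hi⟩ := hKidx' e heE he1 he2
    exact (hind (fun _ => F e) hi).symm
  -- membership facts for G'
  have hGVs : ∀ v ∈ N.Vs, v ∈ G'.Vs := by
    intro v hv; rw [hVs']; exact Finset.mem_union_left _ hv
  have hGVcn : ∀ i, cnew i ∈ G'.Vs := by
    intro i; rw [hVs']
    exact Finset.mem_union_right _ (Finset.mem_image_of_mem cnew (Finset.mem_univ i))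
  have hGS : ∀ {v : V}, v ∉ N.slack → v ∉ G'.slack := by
    intro v hv; rw [hslack']; exact hv
  have hGScn : ∀ i, cnew i ∉ G'.slack :=
    fun i => hGS (fun h => hcnew_new i (N.slack_sub h))
  -- values of the lifted potential
  have hΨ1 : ∀ (p : (V → ℝ) × (V × V → ℝ)) (v : V), v ∈ N.Vs →
      (liftSol N G' c m K cnew p).1 v = p.1 v := fun p v hv => if_pos hv
  have hΨ1cn : ∀ (p : (V → ℝ) × (V × V → ℝ)) (i : Fin m),
      (liftSol N G' c m K cnew p).1 (cnew i) = p.1 c := by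
    intro p i
    simp only [liftSol]
    rw [if_neg (hcnew_new i), if_pos (hGVcn i)]
  -- value of the lifted flow on a new edge
  have hΨ2new : ∀ (p : (V → ℝ) × (V × V → ℝ)) (i : Fin m),
      (liftSol N G' c m K cnew p).2 (c, cnew i) =
      (∑ e ∈ N.E.filter (fun e => e.1 = c ∧ e.2 ∈ K i), p.2 e) -
      (∑ e ∈ N.E.filter (fun e => e.2 = c ∧ e.1 ∈ K i), p.2 e) := by
    intro p i
    simp only [liftSol]
    split_ifs with hmem hcond
    · exact hindcn (fun j =>
        (∑ e ∈ N.E.filter (fun e => e.1 = c ∧ e.2 ∈ K j), p.2 e) -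
        (∑ e ∈ N.E.filter (fun e => e.2 = c ∧ e.1 ∈ K j), p.2 e))
    · exact absurd (hcnew_new i) (by simpa using hcond)
    · exact absurd (hcnE i) hmem
  -- L0' : lifted flow on a redirected edge
  have hL0' : ∀ (p : (V → ℝ) × (V × V → ℝ)), ∀ e ∈ N.E,
      (liftSol N G' c m K cnew p).2 (redir c m K cnew e) = p.2 e := by
    intro p e he
    by_cases h2 : e.2 = c
    · obtain ⟨i, hi⟩ := hKidx e he h2
      have hec : (e.1, c) = e := Prod.ext rfl h2.symm
      have hmem : (e.1, cnew i) ∈ G'.E :=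
        (hE' _).mpr (Or.inr (Or.inl ⟨i, rfl, by rwa [hec], hi⟩))
      rw [redir, if_pos h2, hcn hi]
      simp only [liftSol, unredir]
      rw [if_pos hmem, if_neg (fun h => (hKV hi).2 h.1),
        if_pos (show cnew i ∉ N.Vs from hcnew_new i)]
      exact congrArg p.2 hec
    · by_cases h1 : e.1 = c
      · obtain ⟨i, hi⟩ := hKidx' e he h1 h2
        have hec : (c, e.2) = e := Prod.ext h1.symm rfl
        have hmem : (cnew i, e.2) ∈ G'.E :=
          (hE' _).mpr (Or.inr (Or.inr (Or.inl ⟨i, rfl, by rwa [hec], hi⟩)))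
        rw [redir, if_neg h2, if_pos h1, hcn hi]
        simp only [liftSol, unredir]
        rw [if_pos hmem, if_neg (fun h => hcne i h.1),
          if_neg (not_not.mpr (hKV hi).1), if_pos (hcnew_new i)]
        exact congrArg p.2 hec
      · have hmem : e ∈ G'.E := (hE' _).mpr (Or.inl ⟨he, h1, h2⟩)
        rw [redir, if_neg h2, if_neg h1]
        simp only [liftSol, unredir]
        rw [if_pos hmem, if_neg (fun h => h1 h.1),
          if_neg (not_not.mpr (N.edge_mem e he).2), if_neg (not_not.mpr (N.edge_mem e he).1)]
  -- replica potentials agree with the potential at c, for solutions on G'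
  have hπcn : ∀ (p' : (V → ℝ) × (V × V → ℝ)),
      (∀ e ∈ G'.E, G'.γ e * p'.1 e.1 - p'.1 e.2 = G'.g e (p'.2 e)) →
      ∀ i, p'.1 (cnew i) = p'.1 c := by
    intro p' hEq i
    have h := hEq (c, cnew i) (hcnE i)
    rw [(hnew i).1, (hnew i).2] at h
    simp only at h
    linarith
  -- the forward map sends solutions to solutions
  have hFwd : Set.MapsTo (restrictSol N c m K cnew) (SolSet G') (SolSet N) := by
    rintro p' ⟨⟨hEq, hBal, hSl⟩, hP0, hF0⟩
    have hpc := hπcn p' hEq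
    have hπ : ∀ v ∈ N.Vs, (restrictSol N c m K cnew p').1 v = p'.1 v :=
      fun v hv => if_pos hv
    refine ⟨⟨?_, ?_, ?_⟩, ?_, ?_⟩
    · -- edge equations
      intro e he
      rw [hL0 p' e he, hπ e.1 (N.edge_mem e he).1, hπ e.2 (N.edge_mem e he).2]
      by_cases h2 : e.2 = c
      · obtain ⟨i, hi⟩ := hKidx e he h2
        have hec : (e.1, c) = e := Prod.ext rfl h2.symm
        have hN : (e.1, c) ∈ N.E := by rwa [hec]
        rw [redir, if_pos h2, hcn hi]
        have heq := hEq (e.1, cnew i) ((hE' _).mpr (Or.inr (Or.inl ⟨i, rfl, hN, hi⟩)))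
        rw [(hin i e.1 hi hN).1, (hin i e.1 hi hN).2] at heq
        simp only at heq
        rw [hpc i] at heq
        rw [h2, ← hec]
        exact heq
      · by_cases h1 : e.1 = c
        · obtain ⟨i, hi⟩ := hKidx' e he h1 h2
          have hec : (c, e.2) = e := Prod.ext h1.symm rfl
          have hN : (c, e.2) ∈ N.E := by rwa [hec]
          rw [redir, if_neg h2, if_pos h1, hcn hi]
          have heq := hEq (cnew i, e.2) ((hE' _).mpr (Or.inr (Or.inr (Or.inl ⟨i, rfl, hN, hi⟩))))
          rw [(hout i e.2 hi hN).1, (hout i e.2 hi hN).2] at heq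
          simp only at heq
          rw [hpc i] at heq
          rw [h1, ← hec]
          exact heq
        · have heq := hEq e ((hE' _).mpr (Or.inl ⟨he, h1, h2⟩))
          rw [(hkeep e he h1 h2).1, (hkeep e he h1 h2).2] at heq
          rw [redir, if_neg h2, if_neg h1]
          exact heq
    · -- flow balance
      intro v hv hvs
      have hflow2 : ∀ w : V, (∑ e ∈ N.E.filter (fun e => e.2 = w),
          (restrictSol N c m K cnew p').2 e) =
          ∑ e ∈ N.E.filter (fun e => e.2 = w), p'.2 (redir c m K cnew e) :=
        fun w => Finset.sum_congr rfl (fun e he => hL0 p' e (Finset.mem_filter.mp he).1)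
      have hflow1 : ∀ w : V, (∑ e ∈ N.E.filter (fun e => e.1 = w),
          (restrictSol N c m K cnew p').2 e) =
          ∑ e ∈ N.E.filter (fun e => e.1 = w), p'.2 (redir c m K cnew e) :=
        fun w => Finset.sum_congr rfl (fun e he => hL0 p' e (Finset.mem_filter.mp he).1)
      by_cases hvc : v = c
      · rw [hvc, hflow2, hflow1, hL5a (fun e => p'.2 (redir c m K cnew e)),
          hL5b (fun e => p'.2 (redir c m K cnew e))]
        have hA : ∀ i, (∑ e ∈ N.E.filter (fun e => e.2 = c ∧ e.1 ∈ K i),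
            p'.2 (redir c m K cnew e)) =
            ∑ e ∈ N.E.filter (fun e => e.2 = c ∧ e.1 ∈ K i), p'.2 (e.1, cnew i) :=
          fun i => Finset.sum_congr rfl (fun e he => by
            obtain ⟨_, h2, hK⟩ := Finset.mem_filter.mp he
            rw [redir, if_pos h2, hcn hK])
        have hB : ∀ i, (∑ e ∈ N.E.filter (fun e => e.1 = c ∧ e.2 ∈ K i),
            p'.2 (redir c m K cnew e)) =
            ∑ e ∈ N.E.filter (fun e => e.1 = c ∧ e.2 ∈ K i), p'.2 (cnew i, e.2) :=
          fun i => Finset.sum_congr rfl (fun e he => by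
            obtain ⟨_, h1, hK⟩ := Finset.mem_filter.mp he
            rw [redir, if_neg (hKV hK).2, if_pos h1, hcn hK])
        rw [Finset.sum_congr rfl (fun i _ => hA i), Finset.sum_congr rfl (fun i _ => hB i)]
        have hbal_i : ∀ i,
            (p'.2 (c, cnew i) + ∑ e ∈ N.E.filter (fun e => e.2 = c ∧ e.1 ∈ K i),
              p'.2 (e.1, cnew i)) -
            (∑ e ∈ N.E.filter (fun e => e.1 = c ∧ e.2 ∈ K i), p'.2 (cnew i, e.2)) = 0 := by
          intro i
          have h := hBal (cnew i) (hGVcn i) (hGScn i)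
          rw [hL3a p'.2 i, hL3b p'.2 i, hqnew i] at h
          exact h
        have hbal_c : (0 : ℝ) - (∑ i, p'.2 (c, cnew i)) = N.q c := by
          have h := hBal c (hGVs c hc) (hGS hcns)
          rw [hL4a, Finset.sum_empty, hL4b p'.2, hq' c hc] at h
          exact h
        have hsum : (∑ i, ((∑ e ∈ N.E.filter (fun e => e.2 = c ∧ e.1 ∈ K i),
              p'.2 (e.1, cnew i)) -
            (∑ e ∈ N.E.filter (fun e => e.1 = c ∧ e.2 ∈ K i), p'.2 (cnew i, e.2)))) =
            ∑ i, -(p'.2 (c, cnew i)) :=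
          Finset.sum_congr rfl (fun i _ => by linarith [hbal_i i])
        rw [← Finset.sum_sub_distrib, hsum, Finset.sum_neg_distrib]
        linarith
      · rw [hflow2, hflow1, hL1 p'.2 v hv hvc, hL2 p'.2 v hv hvc]
        have h := hBal v (hGVs v hv) (hGS hvs)
        rwa [hq' v hv] at h
    · -- slack potentials
      intro w hw
      have hwV : w ∈ N.Vs := N.slack_sub hw
      rw [hπ w hwV]
      have hw' : w ∈ G'.slack := by rw [hslack']; exact hw
      have := hSl w hw'
      rwa [hpstar'] at this
    · intro v hv
      exact if_neg hv
    · intro e he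
      simp only [restrictSol]
      rw [if_neg he]
  -- the backward map sends solutions to solutions
  have hBwd : Set.MapsTo (liftSol N G' c m K cnew) (SolSet N) (SolSet G') := by
    rintro p ⟨⟨hEq, hBal, hSl⟩, hP0, hF0⟩
    refine ⟨⟨?_, ?_, ?_⟩, ?_, ?_⟩
    · -- edge equations in G'
      intro e he
      rcases (hE' e).mp he with ⟨heN, h1, h2⟩ | ⟨i, hi2, hiN, hiK⟩ | ⟨i, hi1, hiN, hiK⟩ | ⟨i, hi⟩
      · have hfe : (liftSol N G' c m K cnew p).2 e = p.2 e := by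
          simp only [liftSol, unredir]
          rw [if_pos he, if_neg (fun h => h1 h.1),
            if_neg (not_not.mpr (N.edge_mem e heN).2), if_neg (not_not.mpr (N.edge_mem e heN).1)]
        rw [hfe, hΨ1 p e.1 (N.edge_mem e heN).1, hΨ1 p e.2 (N.edge_mem e heN).2,
          (hkeep e heN h1 h2).1, (hkeep e heN h1 h2).2]
        exact hEq e heN
      · obtain ⟨a, b⟩ := e
        simp only at hi2 hiN hiK
        subst hi2
        have hfe : (liftSol N G' c m K cnew p).2 (a, cnew i) = p.2 (a, c) := by
          simp only [liftSol, unredir]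
          rw [if_pos he, if_neg (fun h => (hKV hiK).2 h.1), if_pos (hcnew_new i)]
        rw [hfe, (hin i a hiK hiN).1, (hin i a hiK hiN).2]
        simp only
        rw [hΨ1 p a (hKV hiK).1, hΨ1cn p i]
        exact hEq (a, c) hiN
      · obtain ⟨a, b⟩ := e
        simp only at hi1 hiN hiK
        subst hi1
        have hfe : (liftSol N G' c m K cnew p).2 (cnew i, b) = p.2 (c, b) := by
          simp only [liftSol, unredir]
          rw [if_pos he, if_neg (fun h => hcne i h.1),
            if_neg (not_not.mpr (hKV hiK).1), if_pos (hcnew_new i)]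
        rw [hfe, (hout i b hiK hiN).1, (hout i b hiK hiN).2]
        simp only
        rw [hΨ1 p b (hKV hiK).1, hΨ1cn p i]
        exact hEq (c, b) hiN
      · obtain ⟨a, b⟩ := e
        rw [Prod.mk.injEq] at hi
        rw [hi.1, hi.2, (hnew i).1, (hnew i).2]
        simp only
        rw [hΨ1 p c hc, hΨ1cn p i]
        ring
    · -- flow balance in G'
      intro v hv hvs
      have hv' : v ∈ N.Vs ∪ Finset.image cnew Finset.univ := by rw [← hVs']; exact hv
      rcases Finset.mem_union.mp hv' with hvN | hvcn
      · by_cases hvc : v = c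
        · rw [hvc, hL4a, Finset.sum_empty, hL4b ((liftSol N G' c m K cnew p).2)]
          have hval : ∀ i, (liftSol N G' c m K cnew p).2 (c, cnew i) =
              (∑ e ∈ N.E.filter (fun e => e.1 = c ∧ e.2 ∈ K i), p.2 e) -
              (∑ e ∈ N.E.filter (fun e => e.2 = c ∧ e.1 ∈ K i), p.2 e) := hΨ2new p
          rw [Finset.sum_congr rfl (fun i _ => hval i), hq' c hc]
          have hb := hBal c hc hcns
          rw [hL5a p.2, hL5b p.2] at hb
          rw [Finset.sum_sub_distrib]
          linarith
        · have hvsN : v ∉ N.slack := fun h => hvs (by rw [hslack']; exact h)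
          rw [← hL1 ((liftSol N G' c m K cnew p).2) v hvN hvc,
            ← hL2 ((liftSol N G' c m K cnew p).2) v hvN hvc]
          have hr2 : (∑ e ∈ N.E.filter (fun e => e.2 = v),
              (liftSol N G' c m K cnew p).2 (redir c m K cnew e)) =
              ∑ e ∈ N.E.filter (fun e => e.2 = v), p.2 e :=
            Finset.sum_congr rfl (fun e he => hL0' p e (Finset.mem_filter.mp he).1)
          have hr1 : (∑ e ∈ N.E.filter (fun e => e.1 = v),
              (liftSol N G' c m K cnew p).2 (redir c m K cnew e)) =
              ∑ e ∈ N.E.filter (fun e => e.1 = v), p.2 e :=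
            Finset.sum_congr rfl (fun e he => hL0' p e (Finset.mem_filter.mp he).1)
          rw [hr2, hr1, hq' v hvN]
          exact hBal v hvN hvsN
      · obtain ⟨i, _, rfl⟩ := Finset.mem_image.mp hvcn
        rw [hL3a ((liftSol N G' c m K cnew p).2) i, hL3b ((liftSol N G' c m K cnew p).2) i,
          hqnew i, hΨ2new p i]
        have hr2 : (∑ e ∈ N.E.filter (fun e => e.2 = c ∧ e.1 ∈ K i),
            (liftSol N G' c m K cnew p).2 (e.1, cnew i)) =
            ∑ e ∈ N.E.filter (fun e => e.2 = c ∧ e.1 ∈ K i), p.2 e :=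
          Finset.sum_congr rfl (fun e he => by
            obtain ⟨heN, h2, hK⟩ := Finset.mem_filter.mp he
            have : redir c m K cnew e = (e.1, cnew i) := by rw [redir, if_pos h2, hcn hK]
            rw [← this]
            exact hL0' p e heN)
        have hr1 : (∑ e ∈ N.E.filter (fun e => e.1 = c ∧ e.2 ∈ K i),
            (liftSol N G' c m K cnew p).2 (cnew i, e.2)) =
            ∑ e ∈ N.E.filter (fun e => e.1 = c ∧ e.2 ∈ K i), p.2 e :=
          Finset.sum_congr rfl (fun e he => by
            obtain ⟨heN, h1, hK⟩ := Finset.mem_filter.mp he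
            have : redir c m K cnew e = (cnew i, e.2) := by
              rw [redir, if_neg (hKV hK).2, if_pos h1, hcn hK]
            rw [← this]
            exact hL0' p e heN)
        rw [hr2, hr1]
        ring
    · -- slack potentials
      intro w hw
      have hwN : w ∈ N.slack := by rw [← hslack']; exact hw
      rw [hΨ1 p w (N.slack_sub hwN), hpstar']
      exact hSl w hwN
    · intro v hv
      have hvN : v ∉ N.Vs := fun h => hv (hGVs v h)
      simp only [liftSol]
      rw [if_neg hvN, if_neg hv]
    · intro e he
      simp only [liftSol]
      rw [if_neg he]
  -- right inverse : restrict ∘ lift = id on SolSet N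
  have hRight : ∀ p ∈ SolSet N, restrictSol N c m K cnew (liftSol N G' c m K cnew p) = p := by
    rintro p ⟨_, hP0, hF0⟩
    refine Prod.ext (funext fun v => ?_) (funext fun e => ?_)
    · by_cases hv : v ∈ N.Vs
      · show (if v ∈ N.Vs then (liftSol N G' c m K cnew p).1 v else 0) = p.1 v
        rw [if_pos hv, hΨ1 p v hv]
      · show (if v ∈ N.Vs then (liftSol N G' c m K cnew p).1 v else 0) = p.1 v
        rw [if_neg hv]
        exact (hP0 v hv).symm
    · by_cases he : e ∈ N.E
      · rw [hL0 (liftSol N G' c m K cnew p) e he]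
        exact hL0' p e he
      · simp only [restrictSol]
        rw [if_neg he]
        exact (hF0 e he).symm
  -- left inverse : lift ∘ restrict = id on SolSet G'
  have hLeft : ∀ p' ∈ SolSet G', liftSol N G' c m K cnew (restrictSol N c m K cnew p') = p' := by
    rintro p' ⟨⟨hEq, hBal, hSl⟩, hP0, hF0⟩
    have hpc := hπcn p' hEq
    refine Prod.ext (funext fun v => ?_) (funext fun e => ?_)
    · by_cases hvN : v ∈ N.Vs
      · rw [hΨ1 _ v hvN]
        show (if v ∈ N.Vs then p'.1 v else 0) = p'.1 v
        rw [if_pos hvN]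
      · by_cases hvG : v ∈ G'.Vs
        · have hv' : v ∈ N.Vs ∪ Finset.image cnew Finset.univ := by rw [← hVs']; exact hvG
          rcases Finset.mem_union.mp hv' with h | h
          · exact absurd h hvN
          · obtain ⟨i, _, rfl⟩ := Finset.mem_image.mp h
            rw [hΨ1cn]
            show (if c ∈ N.Vs then p'.1 c else 0) = p'.1 (cnew i)
            rw [if_pos hc, ← hpc i]
        · simp only [liftSol]
          rw [if_neg hvN, if_neg hvG]
          exact (hP0 v hvG).symm
    · by_cases he : e ∈ G'.E
      · rcases (hE' e).mp he with ⟨heN, h1, h2⟩ | ⟨i, hi2, hiN, hiK⟩ | ⟨i, hi1, hiN, hiK⟩ | ⟨i, hi⟩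
        · simp only [liftSol, unredir]
          rw [if_pos he, if_neg (fun h => h1 h.1),
            if_neg (not_not.mpr (N.edge_mem e heN).2), if_neg (not_not.mpr (N.edge_mem e heN).1),
            hL0 p' e heN, redir, if_neg h2, if_neg h1]
        · obtain ⟨a, b⟩ := e
          simp only at hi2 hiN hiK
          subst hi2
          have hfe : (liftSol N G' c m K cnew (restrictSol N c m K cnew p')).2 (a, cnew i) =
              (restrictSol N c m K cnew p').2 (a, c) := by
            simp only [liftSol, unredir]
            rw [if_pos he, if_neg (fun h => (hKV hiK).2 h.1), if_pos (hcnew_new i)]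
          rw [hfe, hL0 p' (a, c) hiN, redir, if_pos rfl, hcn hiK]
        · obtain ⟨a, b⟩ := e
          simp only at hi1 hiN hiK
          subst hi1
          have hfe : (liftSol N G' c m K cnew (restrictSol N c m K cnew p')).2 (cnew i, b) =
              (restrictSol N c m K cnew p').2 (c, b) := by
            simp only [liftSol, unredir]
            rw [if_pos he, if_neg (fun h => hcne i h.1),
              if_neg (not_not.mpr (hKV hiK).1), if_pos (hcnew_new i)]
          rw [hfe, hL0 p' (c, b) hiN, redir, if_neg (hKV hiK).2, if_pos rfl, hcn hiK]
        · obtain ⟨a, b⟩ := e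
          rw [Prod.mk.injEq] at hi
          rw [hi.1, hi.2, hΨ2new (restrictSol N c m K cnew p') i]
          have hr1 : (∑ e ∈ N.E.filter (fun e => e.1 = c ∧ e.2 ∈ K i),
              (restrictSol N c m K cnew p').2 e) =
              ∑ e ∈ N.E.filter (fun e => e.1 = c ∧ e.2 ∈ K i), p'.2 (cnew i, e.2) :=
            Finset.sum_congr rfl (fun e he' => by
              obtain ⟨heN, h1, hK⟩ := Finset.mem_filter.mp he'
              rw [hL0 p' e heN, redir, if_neg (hKV hK).2, if_pos h1, hcn hK])
          have hr2 : (∑ e ∈ N.E.filter (fun e => e.2 = c ∧ e.1 ∈ K i),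
              (restrictSol N c m K cnew p').2 e) =
              ∑ e ∈ N.E.filter (fun e => e.2 = c ∧ e.1 ∈ K i), p'.2 (e.1, cnew i) :=
            Finset.sum_congr rfl (fun e he' => by
              obtain ⟨heN, h2, hK⟩ := Finset.mem_filter.mp he'
              rw [hL0 p' e heN, redir, if_pos h2, hcn hK])
          rw [hr1, hr2]
          have h := hBal (cnew i) (hGVcn i) (hGScn i)
          rw [hL3a p'.2 i, hL3b p'.2 i, hqnew i] at h
          linarith
      · simp only [liftSol]
        rw [if_neg he]
        exact (hF0 e he).symm
  exact Set.InvOn.bijOn ⟨fun p hp => hLeft p hp, fun p hp => hRight p hp⟩ hFwd hBwd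
end

section
/- Let G be a finite connected simple graph with at least 3 vertices that is not non-separable, and let c be an articulation point of G. Then the number k of connected components of G − c satisfies k ≥ 2, and the subgraphs B_1^+, …, B_k^+ — where B_i is the i-th connected component of G − c and B_i^+ is the subgraph of G on vertex set V(B_i) ∪ {c} with all edges of G having both endpoints in V(B_i) ∪ {c} — together with 𝓒 = {c} form a generalized block-cut set ({B_1^+, …, B_k^+}, {c}) of G whose bipartite incidence graph (vertices {B_1^+, …, B_k^+} ⊔ {c}, with an edge from each B_i^+ to c) is a star, and in particular a tree. -/
variable {V : Type} [Fintype V] [DecidableEq V]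

/-- A connected subgraph is non-separable if it has no articulation point. -/
def IsNonsep (G : SimpleGraph V) (B : G.Subgraph) : Prop :=
  B.Connected ∧ ∀ c : V, ¬ IsArtic G B c

/-- The bipartite incidence graph `bc(G; 𝓑, 𝓒)` on vertex set `𝓑 ⊔ 𝓒`,
with an edge joining `B ∈ 𝓑` and `c ∈ 𝓒` exactly when `c ∈ V(B)`. -/
def bcGraph (G : SimpleGraph V) (𝓑 : Set G.Subgraph) (𝓒 : Set V) :
    SimpleGraph (↥𝓑 ⊕ ↥𝓒) where
  Adj x y :=
    match x, y with
    | Sum.inl B, Sum.inr c => (c : V) ∈ (B : G.Subgraph).verts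
    | Sum.inr c, Sum.inl B => (c : V) ∈ (B : G.Subgraph).verts
    | _, _ => False
  symm := by
    constructor
    intro x y h
    cases x <;> cases y <;> simp_all
  loopless := by
    constructor
    intro x
    cases x <;> simp

/-!
Each vertex of a component `K` of `G − c` reaches `c` by a walk inside `K ∪ {c}`: follow any
walk of `G` to `c`, which cannot leave `K` before it first hits `c`. Hence every `B_K⁺` is
connected. An edge of `G` avoiding `c` stays inside one component, so the `B_K⁺` cover `E(G)`,
and distinct components are disjoint, so `B_K⁺ ∩ B_L⁺ = {c}`. All edges of the incidence graph
pass through `c`, which is adjacent to every block, so it is a star and hence a tree.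
-/

open SimpleGraph

namespace SimpleGraph

variable {W : Type*} {H : SimpleGraph W}

lemma isAcyclic_of_forall_adj_center (z : W) (h : ∀ ⦃x y⦄, H.Adj x y → x = z ∨ y = z) :
    H.IsAcyclic := by
  have bridge : ∀ ⦃v w⦄, H.Adj v w → v ≠ z → H.IsBridge s(v, w) := by
    intro v w hvw hv
    rw [isBridge_iff_forall_walk_mem_edges]
    intro p
    cases p with
    | nil => exact absurd rfl hvw.ne
    | @cons _ x _ hvx _ =>
      obtain rfl : x = w := ((h hvx).resolve_left hv).trans ((h hvw).resolve_left hv).symm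
      simp
  rw [isAcyclic_iff_forall_adj_isBridge]
  intro v w hvw
  rcases h hvw with rfl | rfl
  · rw [Sym2.eq_swap]
    exact bridge hvw.symm hvw.ne.symm
  · exact bridge hvw hvw.ne

lemma isTree_of_forall_adj_center (z : W) (h : ∀ ⦃x y⦄, H.Adj x y → x = z ∨ y = z)
    (hz : ∀ x, x ≠ z → H.Adj x z) : H.IsTree := by
  refine ⟨(connected_iff_exists_forall_reachable H).mpr ⟨z, fun x => ?_⟩,
    isAcyclic_of_forall_adj_center z h⟩
  by_cases hx : x = z
  · rw [hx]
  · exact (hz x hx).symm.reachable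

end SimpleGraph

section Components

variable {W : Type} {G : SimpleGraph W}

lemma bcGraph_isTree_of_forall_mem {𝓑 : Set G.Subgraph} {c : W}
    (h𝓑 : ∀ B ∈ 𝓑, c ∈ B.verts) : (bcGraph G 𝓑 {c}).IsTree := by
  have center : ∀ d : ({c} : Set W), d = ⟨c, rfl⟩ := fun d => Subtype.ext d.2
  refine isTree_of_forall_adj_center (Sum.inr ⟨c, rfl⟩) ?_ ?_
  · rintro (_ | d) (_ | d') h
    · exact h.elim
    · exact .inr (congrArg _ (center d'))
    · exact .inl (congrArg _ (center d))
    · exact h.elim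
  · rintro (B | d) hx
    · exact h𝓑 B B.2
    · exact absurd (congrArg _ (center d)) hx

variable {c : W} {B : G.Subgraph}

def compVerts (K : (B.deleteVerts {c}).coe.ConnectedComponent) : Set W :=
  Subtype.val '' K.supp

lemma compVertexSets_eq_range :
    compVertexSets G B c = Set.range (compVerts (B := B) (c := c)) := by
  ext S
  exact ⟨fun ⟨K, h⟩ => ⟨K, h.symm⟩, fun ⟨K, h⟩ => ⟨K, h.symm⟩⟩

lemma splitBlocks_eq_range :
    splitBlocks G B c = Set.range fun K : (B.deleteVerts {c}).coe.ConnectedComponent =>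
      B.induce (compVerts K ∪ {c}) := by
  rw [splitBlocks, compVertexSets_eq_range, ← Set.range_comp]
  rfl

lemma compVerts_injective :
    Function.Injective (compVerts : (B.deleteVerts {c}).coe.ConnectedComponent → Set W) :=
  fun _ _ h => ConnectedComponent.supp_injective (Set.image_injective.mpr Subtype.val_injective h)

lemma ncard_compVertexSets :
    (compVertexSets G B c).ncard = Nat.card (B.deleteVerts {c}).coe.ConnectedComponent := by
  rw [compVertexSets_eq_range, ← Nat.card_coe_set_eq,
    Nat.card_range_of_injective compVerts_injective]

lemma IsArtic.two_le_ncard_compVertexSets [Finite W] (hc : IsArtic G B c) :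
    2 ≤ (compVertexSets G B c).ncard := by
  have : Nonempty B.coe.ConnectedComponent := ⟨B.coe.connectedComponentMk ⟨c, hc.1⟩⟩
  have hpos : 0 < Nat.card B.coe.ConnectedComponent := Nat.card_pos
  rw [ncard_compVertexSets]
  exact lt_of_le_of_lt hpos hc.2

lemma disjoint_compVerts {K₁ K₂ : (B.deleteVerts {c}).coe.ConnectedComponent}
    (h : K₁ ≠ K₂) : Disjoint (compVerts K₁) (compVerts K₂) :=
  (Set.disjoint_image_iff Subtype.val_injective).mpr
    (pairwise_disjoint_supp_connectedComponent _ h)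

lemma mem_verts_of_mem_splitBlocks {B' : G.Subgraph} (h : B' ∈ splitBlocks G B c) :
    c ∈ B'.verts := by
  obtain ⟨S, -, rfl⟩ := h
  exact Or.inr rfl

abbrev componentOf {v : W} (hv : v ≠ c) :
    ((⊤ : G.Subgraph).deleteVerts {c}).coe.ConnectedComponent :=
  ((⊤ : G.Subgraph).deleteVerts {c}).coe.connectedComponentMk ⟨v, by simpa using hv⟩

lemma mem_compVerts_componentOf {v : W} (hv : v ≠ c) :
    v ∈ compVerts (componentOf (G := G) hv) :=
  ⟨_, rfl, rfl⟩

lemma mem_compVerts_of_adj {K : ((⊤ : G.Subgraph).deleteVerts {c}).coe.ConnectedComponent}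
    {v w : W} (hv : v ∈ compVerts K) (hw : w ≠ c) (h : G.Adj v w) : w ∈ compVerts K := by
  obtain ⟨⟨v, hv'⟩, rfl, rfl⟩ := hv
  have hvc : v ≠ c := by simpa using hv'
  refine ⟨⟨w, by simpa using hw⟩, ?_, rfl⟩
  exact (ConnectedComponent.connectedComponentMk_eq_of_adj (by simp [hvc, hw, h])).symm

lemma exists_walk_support_subset_compVerts_union
    {K : ((⊤ : G.Subgraph).deleteVerts {c}).coe.ConnectedComponent} :
    ∀ {u w : W}, G.Walk u w → w = c → u ∈ compVerts K ∪ {c} →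
      ∃ q : G.Walk u c, ∀ x ∈ q.support, x ∈ compVerts K ∪ {c} := by
  intro u w p
  induction p with
  | nil =>
    rintro rfl -
    exact ⟨.nil, by simp⟩
  | @cons u x w h p ih =>
    intro hw hu
    by_cases huc : u = c
    · subst huc
      exact ⟨.nil, by simp⟩
    · have hx : x ∈ compVerts K ∪ {c} := by
        by_cases hxc : x = c
        · exact .inr hxc
        · exact .inl (mem_compVerts_of_adj (hu.resolve_right huc) hxc h)
      obtain ⟨q, hq⟩ := ih hw hx
      exact ⟨.cons h q, List.forall_mem_cons.mpr ⟨hu, hq⟩⟩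

lemma connected_induce_compVerts_union (hG : G.Connected)
    (K : ((⊤ : G.Subgraph).deleteVerts {c}).coe.ConnectedComponent) :
    ((⊤ : G.Subgraph).induce (compVerts K ∪ {c})).Connected := by
  have toCenter : ∀ u ∈ compVerts K ∪ {c},
      ∃ q : G.Walk u c, q.toSubgraph ≤ (⊤ : G.Subgraph).induce (compVerts K ∪ {c}) := by
    intro u hu
    obtain ⟨q, hq⟩ :=
      exists_walk_support_subset_compVerts_union (hG.preconnected u c).some rfl hu
    exact ⟨q, q.toSubgraph_le_induce_support.trans (Subgraph.induce_mono le_rfl hq)⟩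
  rw [Subgraph.connected_iff_forall_exists_walk_subgraph]
  refine ⟨⟨c, .inr rfl⟩, fun hu hv => ?_⟩
  obtain ⟨p, hp⟩ := toCenter _ hu
  obtain ⟨q, hq⟩ := toCenter _ hv
  refine ⟨p.append q.reverse, ?_⟩
  rw [Walk.toSubgraph_append, Walk.toSubgraph_reverse]
  exact sup_le hp hq

lemma exists_adj_induce_compVerts_union {a b : W} (h : G.Adj a b) :
    ∃ K : ((⊤ : G.Subgraph).deleteVerts {c}).coe.ConnectedComponent,
      ((⊤ : G.Subgraph).induce (compVerts K ∪ {c})).Adj a b := by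
  wlog ha : a ≠ c generalizing a b
  · obtain rfl : a = c := not_not.mp ha
    obtain ⟨K, hK⟩ := this h.symm h.ne.symm
    exact ⟨K, hK.symm⟩
  have haK := mem_compVerts_componentOf (G := G) ha
  refine ⟨componentOf ha, .inl haK, ?_, h⟩
  by_cases hb : b = c
  · exact .inr hb
  · exact .inl (mem_compVerts_of_adj haK hb h)

lemma isGBC_splitBlocks_top [Finite W] (hG : G.Connected) :
    IsGBC G (splitBlocks G ⊤ c) {c} := by
  rw [splitBlocks_eq_range]
  refine ⟨Set.finite_range _, ?_, ?_, ?_⟩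
  · rintro _ ⟨K, rfl⟩
    exact connected_induce_compVerts_union hG K
  · refine subset_antisymm (Set.iUnion₂_subset ?_) fun e he => ?_
    · rintro _ ⟨K, rfl⟩
      exact Subgraph.edgeSet_subset _
    · induction e using Sym2.ind with
      | _ a b =>
        obtain ⟨K, hK⟩ := exists_adj_induce_compVerts_union (c := c) he
        exact Set.mem_biUnion ⟨K, rfl⟩ hK
  · rintro _ ⟨K₁, rfl⟩ _ ⟨K₂, rfl⟩ hne -
    have hK : K₁ ≠ K₂ := fun h => hne (h ▸ rfl)
    refine ⟨c, rfl, ?_⟩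
    rw [Subgraph.induce_verts, Subgraph.induce_verts, ← Set.inter_union_distrib_right,
      (disjoint_compVerts hK).inter_eq, Set.empty_union]

end Components

theorem split_whole_graph_at_articulation_point_general
    (G : SimpleGraph V) (hG : G.Connected)
    (c : V) (hc : IsArtic G (⊤ : G.Subgraph) c) :
    2 ≤ (compVertexSets G (⊤ : G.Subgraph) c).ncard ∧
    IsGBC G (splitBlocks G (⊤ : G.Subgraph) c) {c} ∧
    (∀ B : ↥(splitBlocks G (⊤ : G.Subgraph) c),
      (bcGraph G (splitBlocks G (⊤ : G.Subgraph) c) {c}).Adj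
        (Sum.inl B) (Sum.inr ⟨c, rfl⟩)) ∧
    (bcGraph G (splitBlocks G (⊤ : G.Subgraph) c) {c}).IsTree :=
  ⟨hc.two_le_ncard_compVertexSets, isGBC_splitBlocks_top hG,
    fun B => mem_verts_of_mem_splitBlocks B.2,
    bcGraph_isTree_of_forall_mem fun _ => mem_verts_of_mem_splitBlocks⟩

/-- Splitting a separable connected graph `G` at an articulation point `c`
yields a generalized block-cut set `({B_1⁺, …, B_k⁺}, {c})` with `k ≥ 2`
whose bipartite incidence graph is a star (each `B_i⁺` joined to `c`), and
in particular a tree. -/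
theorem split_whole_graph_at_articulation_point
    (G : SimpleGraph V) (hG : G.Connected) (hcard : 3 ≤ Fintype.card V)
    (hsep : ¬ IsNonsep G (⊤ : G.Subgraph))
    (c : V) (hc : IsArtic G (⊤ : G.Subgraph) c) :
    2 ≤ (compVertexSets G (⊤ : G.Subgraph) c).ncard ∧
    IsGBC G (splitBlocks G (⊤ : G.Subgraph) c) {c} ∧
    (∀ B : ↥(splitBlocks G (⊤ : G.Subgraph) c),
      (bcGraph G (splitBlocks G (⊤ : G.Subgraph) c) {c}).Adj
        (Sum.inl B) (Sum.inr ⟨c, rfl⟩)) ∧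
    (bcGraph G (splitBlocks G (⊤ : G.Subgraph) c) {c}).IsTree :=
  split_whole_graph_at_articulation_point_general G hG c hc
end
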